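/- arXiv:0706.3242 — 6 statements merged into one kernel-verified Lean document; each statement's English description precedes it below -/
import Mathlib

section
/- Let F be holomorphic in a neighbourhood of the rectangle [-1,1] + i[-c₋, c₊] for fixed c₋, c₊ > 0. Suppose log|F(ζ)| ≤ M on the whole rectangle, and |F(ζ)| ≤ α + γ/Im ζ for ζ ∈ [-1,1] + i(0, c₊]. Then for any ε with γ M^{3/2}/α ≪ ε^{5/2} ≪ 1 (i.e. there exist absolute constants making the comparisons quantitative), one has |F(0)| ≤ (1+ε)α. -/
/-!
Apply the maximum principle to `F g` on the thin rectangle `[-1,1] + i[-δ₋, δ₊]`, where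
`g(ζ) = exp(-3Mζ² + iaζ)` with `a = -2M/δ₋`, so that `g(0) = 1` and
`log |g(x + iy)| = -3M(x² - y²) + 2My/δ₋`. On the bottom edge and on the sides (where `x² = 1` and
`|y| ≤ δ₋ ≤ 1/2`, `y ≤ δ₊ ≤ δ₋/2`) this is at most `-M`, which compensates `|F| ≤ e^M`. On the top
edge `|F| ≤ α + γ/δ₊` and `log |g| ≤ 3Mδ₊² + 2Mδ₊/δ₋`. Taking `δ₋` a constant depending only on
`c₋, c₊` and `δ₊ = εδ₋/(8M)`, the top edge contributes at most `(1 + ε/4) α e^{ε/3} ≤ (1 + ε) α`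
as soon as `γM ≪ ε²α`, which the hypothesis `γM^{3/2}/α ≪ ε^{5/2}` implies.
-/

open Set Complex

theorem norm_le_of_forall_rectangle_edge {f : ℂ → ℂ} {x₁ x₂ y₁ y₂ C : ℝ}
    (hx : x₁ < x₂) (hy : y₁ < y₂) (hf : DifferentiableOn ℂ f (Icc x₁ x₂ ×ℂ Icc y₁ y₂))
    (hbot : ∀ z : ℂ, z.re ∈ Icc x₁ x₂ → z.im = y₁ → ‖f z‖ ≤ C)
    (htop : ∀ z : ℂ, z.re ∈ Icc x₁ x₂ → z.im = y₂ → ‖f z‖ ≤ C)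
    (hside : ∀ z : ℂ, z.re = x₁ ∨ z.re = x₂ → z.im ∈ Icc y₁ y₂ → ‖f z‖ ≤ C)
    {w : ℂ} (hw : w ∈ Icc x₁ x₂ ×ℂ Icc y₁ y₂) : ‖f w‖ ≤ C := by
  have hclosure : closure (Ioo x₁ x₂ ×ℂ Ioo y₁ y₂) = Icc x₁ x₂ ×ℂ Icc y₁ y₂ := by
    rw [closure_reProdIm, closure_Ioo hx.ne, closure_Ioo hy.ne]
  rw [← hclosure] at hf hw
  refine norm_le_of_forall_mem_frontier_norm_le
    ((Metric.isBounded_Ioo _ _).reProdIm (Metric.isBounded_Ioo _ _)) hf.diffContOnCl ?_ hw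
  rw [frontier_reProdIm, closure_Ioo hx.ne, closure_Ioo hy.ne, frontier_Ioo hx, frontier_Ioo hy]
  rintro z (⟨hre, him⟩ | ⟨hre, him⟩)
  · rcases him with him | him
    exacts [hbot z hre him, htop z hre him]
  · exact hside z hre him

noncomputable def threeLinesWeight (M δ : ℝ) (ζ : ℂ) : ℂ :=
  cexp (-((3 * M : ℝ) : ℂ) * ζ ^ 2 + ((-(2 * M) / δ : ℝ) : ℂ) * I * ζ)

section ThreeLinesWeight

variable {M δ e : ℝ} {z : ℂ}

theorem differentiable_threeLinesWeight (M δ : ℝ) : Differentiable ℂ (threeLinesWeight M δ) := by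
  unfold threeLinesWeight
  fun_prop

theorem threeLinesWeight_zero (M δ : ℝ) : threeLinesWeight M δ 0 = 1 := by
  simp [threeLinesWeight]

theorem norm_threeLinesWeight (M δ : ℝ) (ζ : ℂ) :
    ‖threeLinesWeight M δ ζ‖ = Real.exp (-(3 * M) * (ζ.re ^ 2 - ζ.im ^ 2) + 2 * M * ζ.im / δ) := by
  rw [threeLinesWeight, norm_exp]
  congr 1
  simp [pow_two]
  ring

theorem norm_threeLinesWeight_le_exp_neg (hM : 0 ≤ M) (hδ : 0 < δ) (hδ' : δ ≤ 1 / 2)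
    (heδ : 2 * e ≤ δ) (him : z.im ∈ Icc (-δ) e)
    (hedge : z.im = -δ ∨ z.re = -1 ∨ z.re = 1) :
    ‖threeLinesWeight M δ z‖ ≤ Real.exp (-M) := by
  rw [norm_threeLinesWeight, Real.exp_le_exp]
  have him_sq : z.im ^ 2 ≤ 1 / 4 := by
    nlinarith [him.1, him.2]
  have hdrift : 2 * M * z.im / δ ≤ M := by
    rw [div_le_iff₀ hδ]; nlinarith [him.2]
  have hM_im_sq := mul_le_mul_of_nonneg_left him_sq hM
  rcases hedge with hbot | hside
  · have hdrift_bot : 2 * M * z.im / δ = -(2 * M) := by rw [hbot]; field_simp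
    nlinarith [mul_nonneg hM (sq_nonneg z.re)]
  · have hre_sq : z.re ^ 2 = 1 := by rcases hside with h | h <;> simp [h]
    rw [hre_sq]; nlinarith

theorem norm_threeLinesWeight_le_of_im_eq (hM : 0 ≤ M) (him : z.im = e) :
    ‖threeLinesWeight M δ z‖ ≤ Real.exp (3 * M * e ^ 2 + 2 * M * e / δ) := by
  rw [norm_threeLinesWeight, Real.exp_le_exp, him]
  nlinarith [sq_nonneg z.re]

end ThreeLinesWeight

theorem norm_le_of_threeLinesWeight {F : ℂ → ℂ} {M δ e B : ℝ} (hM : 0 ≤ M) (hδ : δ ≤ 1 / 2)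
    (he : 0 < e) (heδ : 2 * e ≤ δ) (hF : DifferentiableOn ℂ F (Icc (-1) 1 ×ℂ Icc (-δ) e))
    (hFM : ∀ z ∈ Icc (-1) 1 ×ℂ Icc (-δ) e, ‖F z‖ ≤ Real.exp M)
    (hFtop : ∀ z : ℂ, z.re ∈ Icc (-1) 1 → z.im = e → ‖F z‖ ≤ B) :
    ‖F 0‖ ≤ max 1 (B * Real.exp (3 * M * e ^ 2 + 2 * M * e / δ)) := by
  set g := threeLinesWeight M δ
  have hδ0 : 0 < δ := by linarith
  have hlow : ∀ z : ℂ, z.re ∈ Icc (-1) 1 → z.im ∈ Icc (-δ) e →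
      (z.im = -δ ∨ z.re = -1 ∨ z.re = 1) →
      ‖F z * g z‖ ≤ max 1 (B * Real.exp (3 * M * e ^ 2 + 2 * M * e / δ)) := fun z hre him hedge ↦
    calc ‖F z * g z‖ = ‖F z‖ * ‖g z‖ := norm_mul _ _
      _ ≤ Real.exp M * Real.exp (-M) := mul_le_mul (hFM z ⟨hre, him⟩)
          (norm_threeLinesWeight_le_exp_neg hM hδ0 hδ heδ him hedge) (norm_nonneg _)
          (Real.exp_pos _).le
      _ = 1 := by rw [← Real.exp_add, add_neg_cancel, Real.exp_zero]
      _ ≤ _ := le_max_left _ _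
  have h0 : (0 : ℂ) ∈ Icc (-1) 1 ×ℂ Icc (-δ) e := by
    rw [mem_reProdIm, zero_re, zero_im, mem_Icc, mem_Icc]
    refine ⟨⟨?_, ?_⟩, ?_, ?_⟩ <;> linarith
  simpa [g, threeLinesWeight_zero] using norm_le_of_forall_rectangle_edge (f := fun z ↦ F z * g z)
    (by norm_num) (by linarith) (hF.mul (differentiable_threeLinesWeight M δ).differentiableOn)
    (fun z hre him ↦ hlow z hre (by rw [mem_Icc, him]; constructor <;> linarith) (Or.inl him))
    (fun z hre him ↦ by
      have hFz := hFtop z hre him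
      calc ‖F z * g z‖ = ‖F z‖ * ‖g z‖ := norm_mul _ _
        _ ≤ B * Real.exp (3 * M * e ^ 2 + 2 * M * e / δ) := mul_le_mul hFz
            (norm_threeLinesWeight_le_of_im_eq hM him) (norm_nonneg _) ((norm_nonneg _).trans hFz)
        _ ≤ _ := le_max_right _ _)
    (fun z hre him ↦ hlow z (by rcases hre with h | h <;> simp [h]) him (Or.inr hre)) h0

noncomputable def upperHeight (M δ ε : ℝ) : ℝ := ε * δ / (8 * M)

section UpperHeight

variable {M δ α γ ε : ℝ}

theorem upperHeight_pos (hM : 0 < M) (hδ : 0 < δ) (hε : 0 < ε) : 0 < upperHeight M δ ε := by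
  unfold upperHeight; positivity

theorem two_mul_upperHeight_le (hM : 1 ≤ M) (hδ : 0 < δ) (hε1 : ε ≤ 1) :
    2 * upperHeight M δ ε ≤ δ := by
  rw [upperHeight, ← mul_div_assoc, div_le_iff₀ (by linarith)]
  nlinarith

theorem three_lines_exponent_upperHeight_le (hM : 1 ≤ M) (hδ : 0 < δ) (hδ' : δ ≤ 1 / 2)
    (hε : 0 ≤ ε) (hε1 : ε ≤ 1) :
    3 * M * upperHeight M δ ε ^ 2 + 2 * M * upperHeight M δ ε / δ ≤ ε / 3 := by
  have hM0 : 0 < M := by linarith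
  have hdrift : 2 * M * upperHeight M δ ε / δ = ε / 4 := by
    rw [upperHeight]; field_simp; ring
  have hsq : 3 * M * upperHeight M δ ε ^ 2 = 3 * ε ^ 2 * δ ^ 2 / (64 * M) := by
    rw [upperHeight]; field_simp; ring
  rw [hdrift, hsq, div_add_div _ _ (by positivity) (by norm_num),
    div_le_div_iff₀ (by positivity) (by norm_num)]
  nlinarith [mul_le_mul hδ' hδ' hδ.le (by norm_num), mul_nonneg hε (sub_nonneg.2 hε1),
    mul_nonneg (mul_nonneg hε hε) (sub_nonneg.2 hM)]

theorem div_upperHeight_le (hM : 1 ≤ M) (hδ : 0 < δ) (hα : 0 < α) (hγ : 0 ≤ γ)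
    (hε : 0 < ε) (hε1 : ε ≤ 1)
    (hK : 32 / δ * (γ * M ^ ((3 : ℝ) / 2) / α) ≤ ε ^ ((5 : ℝ) / 2)) :
    γ / upperHeight M δ ε ≤ ε * α / 4 := by
  have hM32 : M ≤ M ^ ((3 : ℝ) / 2) := by
    simpa using Real.rpow_le_rpow_of_exponent_le hM (by norm_num : (1 : ℝ) ≤ 3 / 2)
  have hε52 : ε ^ ((5 : ℝ) / 2) ≤ ε ^ 2 := by
    simpa using Real.rpow_le_rpow_of_exponent_ge hε hε1 (by norm_num : (2 : ℝ) ≤ 5 / 2)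
  have hK' : 32 * (γ * M ^ ((3 : ℝ) / 2)) ≤ δ * α * ε ^ ((5 : ℝ) / 2) := by
    rw [div_mul_div_comm, div_le_iff₀ (by positivity)] at hK; linarith
  rw [div_le_iff₀ (upperHeight_pos (by linarith) hδ hε), upperHeight]
  field_simp
  nlinarith [mul_le_mul_of_nonneg_left hM32 hγ,
    mul_le_mul_of_nonneg_left hε52 (mul_pos hδ hα).le]

end UpperHeight

theorem le_one_of_mul_rpow_le_one {K ε p : ℝ} (hK : 1 ≤ K) (hε : 0 < ε) (hp : 0 < p)
    (h : K * ε ^ p ≤ 1) : ε ≤ 1 := by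
  have hεp : ε ^ p ≤ 1 := by nlinarith [Real.rpow_pos_of_pos hε p]
  exact (((Real.rpow_le_one_iff_of_pos hε).1 hεp).resolve_left (fun h ↦ by linarith [h.2])).1

theorem one_add_div_four_mul_exp_div_three_le {ε : ℝ} (hε : 0 ≤ ε) (hε1 : ε ≤ 1) :
    (1 + ε / 4) * Real.exp (ε / 3) ≤ 1 + ε := by
  have hexp := (abs_le.1 (Real.abs_exp_sub_one_sub_id_le (x := ε / 3)
    (by rw [abs_of_nonneg (by positivity)]; linarith))).2
  nlinarith

/-- Three-line lemma with parameters (Lemma 8.4 of Nonnenmacher–Zworski):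
if `F` is holomorphic near the rectangle `[-1,1] + i[-c₋,c₊]`, `log |F| ≤ M` on the
rectangle and `|F(ζ)| ≤ α + γ/Im ζ` in the upper part, then for any `ε` with
`γ M^{3/2}/α ≪ ε^{5/2} ≪ 1` one has `|F(0)| ≤ (1+ε)α`. -/
theorem stmt0 (cm cp : ℝ) (hcm : 0 < cm) (hcp : 0 < cp) :
    ∃ K : ℝ, 0 < K ∧
      ∀ (M α γ ε : ℝ) (F : ℂ → ℂ),
        (∃ U : Set ℂ, IsOpen U ∧
            {ζ : ℂ | ζ.re ∈ Icc (-1 : ℝ) 1 ∧ ζ.im ∈ Icc (-cm) cp} ⊆ U ∧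
            DifferentiableOn ℂ F U) →
        (∀ ζ : ℂ, ζ.re ∈ Icc (-1 : ℝ) 1 → ζ.im ∈ Icc (-cm) cp →
          Real.log ‖F ζ‖ ≤ M) →
        (∀ ζ : ℂ, ζ.re ∈ Icc (-1 : ℝ) 1 → ζ.im ∈ Ioc 0 cp →
          ‖F ζ‖ ≤ α + γ / ζ.im) →
        1 ≤ M → 1 ≤ α → 0 < γ → 0 < ε →
        K * (γ * M ^ ((3 : ℝ) / 2) / α) ≤ ε ^ ((5 : ℝ) / 2) →
        K * ε ^ ((5 : ℝ) / 2) ≤ 1 →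
        ‖F 0‖ ≤ (1 + ε) * α := by
  set δ := min (min cm cp) (1 / 2)
  have hδ : 0 < δ := lt_min (lt_min hcm hcp) (by norm_num)
  have hδcm : δ ≤ cm := (min_le_left _ _).trans (min_le_left _ _)
  have hδcp : δ ≤ cp := (min_le_left _ _).trans (min_le_right _ _)
  have hδ2 : δ ≤ 1 / 2 := min_le_right _ _
  refine ⟨32 / δ, by positivity, ?_⟩
  intro M α γ ε F ⟨U, _, hRU, hFU⟩ hM hup hM1 hα1 hγ hε hKγ hKε
  have hε1 : ε ≤ 1 :=
    le_one_of_mul_rpow_le_one (by rw [le_div_iff₀ hδ]; linarith) hε (by norm_num) hKε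
  set e := upperHeight M δ ε
  have he : 0 < e := upperHeight_pos (by linarith) hδ hε
  have heδ : 2 * e ≤ δ := two_mul_upperHeight_le hM1 hδ hε1
  have hrect : Icc (-1) 1 ×ℂ Icc (-δ) e ⊆ {ζ : ℂ | ζ.re ∈ Icc (-1 : ℝ) 1 ∧ ζ.im ∈ Icc (-cm) cp} :=
    fun z ⟨hre, him⟩ ↦ ⟨hre, by linarith [him.1], by linarith [him.2]⟩
  refine (norm_le_of_threeLinesWeight (B := α + γ / e) (by linarith) hδ2 he heδ
    (hFU.mono (hrect.trans hRU))
    (fun z hz ↦ (Real.le_exp_log _).trans (Real.exp_le_exp.2 (hM z (hrect hz).1 (hrect hz).2)))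
    (fun z hre him ↦ by simpa [him] using hup z hre (him ▸ ⟨he, by linarith⟩))).trans
    (max_le (by nlinarith) ?_)
  calc (α + γ / e) * Real.exp (3 * M * e ^ 2 + 2 * M * e / δ)
      ≤ (1 + ε / 4) * α * Real.exp (ε / 3) := mul_le_mul
        (by linarith [div_upperHeight_le hM1 hδ (by linarith) hγ.le hε hε1 hKγ])
        (Real.exp_le_exp.2 (three_lines_exponent_upperHeight_le hM1 hδ hδ2 hε.le hε1))
        (Real.exp_pos _).le (by positivity)
    _ ≤ (1 + ε) * α := by
        nlinarith [one_add_div_four_mul_exp_div_three_le hε.le hε1]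
end

section
/- Let A : T*ℝⁿ → ℝ be a smooth function with A ≤ 0 everywhere and with all second derivatives bounded. Then for every multi-index β there is a constant C_β such that for all h ∈ (0,1], the function v₀ = exp(A/h) satisfies |∂^β v₀| ≤ C_β h^{-|β|/2}; that is, exp(A/h) belongs to the symbol class S_{1/2}. -/
open scoped RealInnerProductSpace

lemma grad_bound {d : ℕ} (A : EuclideanSpace ℝ (Fin d) → ℝ)
    (hA : ContDiff ℝ (⊤ : ℕ∞) A) (hneg : ∀ x, A x ≤ 0) {K : ℝ} (hK : 0 < K)
    (h2 : ∀ x, ‖iteratedFDeriv ℝ 2 A x‖ ≤ K) (x : EuclideanSpace ℝ (Fin d)) :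
    ‖fderiv ℝ A x‖ ≤ Real.sqrt (4 * K) * Real.sqrt (-A x) := by
  set L := fderiv ℝ A x with hL
  have hdd : ContDiff ℝ 1 (fderiv ℝ A) := hA.fderiv_right (WithTop.coe_le_coe.2 le_top)
  have hsnd : ∀ z, ‖fderiv ℝ (fderiv ℝ A) z‖ ≤ K := by
    intro z
    refine ContinuousLinearMap.opNorm_le_bound _ hK.le (fun v => ?_)
    have hv : (0:ℝ) ≤ K * ‖v‖ := by positivity
    refine ContinuousLinearMap.opNorm_le_bound _ hv (fun w => ?_)
    have heq : fderiv ℝ (fderiv ℝ A) z v w = iteratedFDeriv ℝ 2 A z ![v, w] := by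
      rw [iteratedFDeriv_two_apply]; simp
    rw [heq]
    have hle := ContinuousMultilinearMap.le_opNorm (iteratedFDeriv ℝ 2 A z) ![v, w]
    have hprod : (∏ i, ‖(![v, w]) i‖) = ‖v‖ * ‖w‖ := by
      rw [Fin.prod_univ_two]; simp
    rw [hprod] at hle
    have h0 : (0:ℝ) ≤ ‖v‖ * ‖w‖ := mul_nonneg (norm_nonneg v) (norm_nonneg w)
    calc ‖iteratedFDeriv ℝ 2 A z ![v, w]‖ ≤ ‖iteratedFDeriv ℝ 2 A z‖ * (‖v‖ * ‖w‖) := hle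
      _ ≤ K * (‖v‖ * ‖w‖) := mul_le_mul_of_nonneg_right (h2 z) h0
      _ = K * ‖v‖ * ‖w‖ := by ring
  have hLip : ∀ y z : EuclideanSpace ℝ (Fin d),
      ‖fderiv ℝ A y - fderiv ℝ A z‖ ≤ K * ‖y - z‖ := by
    intro y z
    exact convex_univ.norm_image_sub_le_of_norm_fderiv_le
      (fun w _ => (hdd.differentiable one_ne_zero).differentiableAt)
      (fun w _ => hsnd w) trivial trivial
  have hTaylor : ∀ v : EuclideanSpace ℝ (Fin d), A (x + v) ≥ A x + L v - K * ‖v‖ ^ 2 := by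
    intro v
    have hball : ∀ z ∈ Metric.closedBall x ‖v‖, ‖fderiv ℝ A z - L‖ ≤ K * ‖v‖ := by
      intro z hz
      rw [Metric.mem_closedBall, dist_eq_norm] at hz
      calc ‖fderiv ℝ A z - L‖ ≤ K * ‖z - x‖ := hLip z x
        _ ≤ K * ‖v‖ := by nlinarith
    have hmv := (convex_closedBall x ‖v‖).norm_image_sub_le_of_norm_fderiv_le'
      (f := A) (φ := L)
      (fun z _ => (hA.differentiable (by simp)).differentiableAt) hball
      (Metric.mem_closedBall_self (norm_nonneg v))
      (show x + v ∈ Metric.closedBall x ‖v‖ by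
        simp [Metric.mem_closedBall, dist_eq_norm])
    simp only [add_sub_cancel_left] at hmv
    have h1 : |A (x + v) - A x - L v| ≤ K * ‖v‖ * ‖v‖ := hmv
    have := abs_le.1 h1
    nlinarith [this.1]
  set w := (InnerProductSpace.toDual ℝ (EuclideanSpace ℝ (Fin d))).symm L with hw
  have hwL : ⟪w, w⟫ = L w := InnerProductSpace.toDual_symm_apply
  have hwn : ‖w‖ = ‖L‖ := LinearIsometryEquiv.norm_map _ _
  have hLw2 : L w = ‖L‖ ^ 2 := by
    rw [← hwL, real_inner_self_eq_norm_sq, hwn]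
  have hkey : A x + ‖L‖ ^ 2 / (4 * K) ≤ 0 := by
    have ht := hTaylor ((1 / (2 * K)) • w)
    have hLw : L ((1 / (2 * K)) • w) = (1 / (2 * K)) * ‖L‖ ^ 2 := by
      rw [map_smul, smul_eq_mul, hLw2]
    have hnv : ‖(1 / (2 * K)) • w‖ ^ 2 = (1 / (2 * K)) ^ 2 * ‖L‖ ^ 2 := by
      rw [norm_smul, mul_pow, hwn, Real.norm_eq_abs,
        abs_of_pos (by positivity : (0:ℝ) < 1 / (2 * K))]
    have hA0 := hneg (x + (1 / (2 * K)) • w)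
    rw [hLw, hnv] at ht
    have heq : (1 / (2 * K)) * ‖L‖ ^ 2 - K * ((1 / (2 * K)) ^ 2 * ‖L‖ ^ 2)
        = ‖L‖ ^ 2 / (4 * K) := by field_simp; ring
    nlinarith [heq]
  have h4K : (0:ℝ) < 4 * K := by linarith
  have hL2 : ‖L‖ ^ 2 ≤ (4 * K) * (-A x) := by
    have := (div_le_iff₀ h4K).1 (by linarith : ‖L‖ ^ 2 / (4 * K) ≤ -A x)
    linarith
  calc ‖L‖ = Real.sqrt (‖L‖ ^ 2) := by rw [Real.sqrt_sq (norm_nonneg L)]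
    _ ≤ Real.sqrt ((4 * K) * (-A x)) := Real.sqrt_le_sqrt hL2
    _ = Real.sqrt (4 * K) * Real.sqrt (-A x) := Real.sqrt_mul h4K.le _

lemma sqrt_exp_aux {t : ℝ} (ht : 0 ≤ t) : Real.sqrt t * Real.exp (-t) ≤ 1 := by
  have h1 : Real.sqrt t ≤ Real.exp t := by
    rcases le_total t 1 with h | h
    · calc Real.sqrt t ≤ 1 := by
            rw [show (1:ℝ) = Real.sqrt 1 by simp]; exact Real.sqrt_le_sqrt h
        _ ≤ Real.exp t := by
            rw [show (1:ℝ) = Real.exp 0 by simp]; exact Real.exp_le_exp.2 ht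
    · calc Real.sqrt t ≤ t := by
            nlinarith [Real.sq_sqrt (by linarith : (0:ℝ) ≤ t), Real.sqrt_nonneg t]
        _ ≤ Real.exp t := (Real.add_one_le_exp t).trans' (by linarith)
  calc Real.sqrt t * Real.exp (-t) ≤ Real.exp t * Real.exp (-t) :=
        mul_le_mul_of_nonneg_right h1 (Real.exp_pos _).le
    _ = 1 := by rw [← Real.exp_add]; simp

lemma sqrt_neg_exp {a c : ℝ} (ha : a ≤ 0) (hc : 0 < c) :
    Real.sqrt (-a) * Real.exp (a / c) ≤ Real.sqrt c := by
  set t := -a / c with hts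
  have ht : 0 ≤ t := div_nonneg (by linarith) hc.le
  have hat : -a = c * t := by rw [hts, mul_div_assoc', mul_div_cancel_left₀ _ hc.ne']
  have hac : a / c = -t := by rw [hts]; field_simp
  calc Real.sqrt (-a) * Real.exp (a / c)
      = Real.sqrt c * (Real.sqrt t * Real.exp (-t)) := by
        rw [hat, hac, Real.sqrt_mul hc.le]; ring
    _ ≤ Real.sqrt c * 1 :=
        mul_le_mul_of_nonneg_left (sqrt_exp_aux ht) (Real.sqrt_nonneg c)
    _ = Real.sqrt c := mul_one _

lemma sqrt_le_self' {a : ℝ} (h : 1 ≤ a) : Real.sqrt a ≤ a := by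
  nlinarith [Real.sq_sqrt (by linarith : (0:ℝ) ≤ a), Real.sqrt_nonneg a]

lemma div_neg_mono {a b c : ℝ} (ha : a ≤ 0) (hb : 0 < b) (hbc : b ≤ c) :
    a / b ≤ a / c := by
  rw [div_le_div_iff₀ hb (by linarith)]
  nlinarith

lemma key2 {d : ℕ} (A : EuclideanSpace ℝ (Fin d) → ℝ)
    (hA : ContDiff ℝ (⊤ : ℕ∞) A) (hneg : ∀ x, A x ≤ 0)
    (hbd : ∀ j : ℕ, 2 ≤ j → ∃ K : ℝ, ∀ x, ‖iteratedFDeriv ℝ j A x‖ ≤ K)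
    {M : ℝ} (hM : 0 ≤ M) (gb : ∀ x, ‖fderiv ℝ A x‖ ≤ M * Real.sqrt (-A x)) :
    ∀ k : ℕ, ∃ C : ℝ, 0 < C ∧ ∀ i ≤ k, ∀ h : ℝ, 0 < h → h ≤ 1 → ∀ x,
      ‖iteratedFDeriv ℝ i (fun y => Real.exp (A y / h)) x‖
        ≤ C * h ^ (-(i : ℝ) / 2) * Real.exp (A x / (2 ^ i * h)) := by
  choose K hK using hbd
  set B : ℕ → ℝ := fun j => if hj : 2 ≤ j then max (K j hj) 0 else 0 with hB
  have hBnn : ∀ j, 0 ≤ B j := by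
    intro j; rw [hB]; dsimp only; split
    · exact le_max_right _ _
    · exact le_rfl
  have hBb : ∀ j, 2 ≤ j → ∀ x, ‖iteratedFDeriv ℝ j A x‖ ≤ B j := by
    intro j hj x; rw [hB]; dsimp only; rw [dif_pos hj]
    exact (hK j hj x).trans (le_max_left _ _)
  intro k
  induction k with
  | zero =>
    refine ⟨1, one_pos, ?_⟩
    intro i hi h hh hh1 x
    interval_cases i
    simp only [norm_iteratedFDeriv_zero, Real.norm_eq_abs,
      abs_of_pos (Real.exp_pos _), Nat.cast_zero, neg_zero, zero_div,
      Real.rpow_zero, pow_zero, one_mul, mul_one]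
    exact le_refl _
  | succ k ih =>
    obtain ⟨C, hC, IH⟩ := ih
    set c : ℕ → ℝ := fun i => if i = k then C * M * 2 ^ (k + 1)
      else (k.choose i : ℝ) * C * B (k - i + 1) with hc
    set S : ℝ := ∑ i ∈ Finset.range (k + 1), c i with hS
    refine ⟨max C (S + 1), lt_max_of_lt_left hC, ?_⟩
    intro i' hi' h hh hh1 x
    have hXnn : (0:ℝ) ≤ h ^ (-(i' : ℝ) / 2) * Real.exp (A x / (2 ^ i' * h)) :=
      mul_nonneg (Real.rpow_nonneg hh.le _) (Real.exp_pos _).le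
    rcases Nat.lt_succ_iff_lt_or_eq.1 (Nat.lt_succ_of_le hi') with hik | rfl
    · -- case i' ≤ k : use IH and enlarge the constant
      calc ‖iteratedFDeriv ℝ i' (fun y => Real.exp (A y / h)) x‖
          ≤ C * h ^ (-(i' : ℝ) / 2) * Real.exp (A x / (2 ^ i' * h)) :=
            IH i' (by omega) h hh hh1 x
        _ ≤ max C (S + 1) * h ^ (-(i' : ℝ) / 2) * Real.exp (A x / (2 ^ i' * h)) := by
            have := le_max_left C (S + 1)
            have h1 : (0:ℝ) ≤ h ^ (-(i' : ℝ) / 2) := Real.rpow_nonneg hh.le _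
            have h2 : (0:ℝ) ≤ Real.exp (A x / (2 ^ i' * h)) := (Real.exp_pos _).le
            nlinarith
    · -- case i' = k + 1 : the Leibniz computation
      have hh' : h ≠ 0 := hh.ne'
      have hAd : Differentiable ℝ A := hA.differentiable (by simp)
      have hcu : ContDiff ℝ (⊤ : ℕ∞) (fun y => Real.exp (A y / h)) :=
        Real.contDiff_exp.comp (hA.div_const h)
      have hs : ContDiff ℝ (⊤ : ℕ∞) (fun y => h⁻¹ * Real.exp (A y / h)) :=
        contDiff_const.mul hcu
      have hg : ContDiff ℝ (⊤ : ℕ∞) (fderiv ℝ A) := hA.fderiv_right (by simp)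
      have hfd : fderiv ℝ (fun y => Real.exp (A y / h))
          = fun y => (h⁻¹ * Real.exp (A y / h)) • fderiv ℝ A y := by
        funext y
        have h1 : HasFDerivAt A (fderiv ℝ A y) y := (hAd y).hasFDerivAt
        have h2 : HasFDerivAt (fun z => A z / h) (h⁻¹ • fderiv ℝ A y) y := by
          simpa [div_eq_inv_mul] using h1.const_mul h⁻¹
        have h3 := h2.exp
        rw [h3.fderiv, smul_smul, mul_comm]
      have E2pos : (0:ℝ) < Real.exp (A x / (2 ^ (k + 1) * h)) := Real.exp_pos _
      set E2 : ℝ := Real.exp (A x / (2 ^ (k + 1) * h)) with hE2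
      have hsnorm : ∀ i : ℕ, ‖iteratedFDeriv ℝ i (fun y => h⁻¹ * Real.exp (A y / h)) x‖
          = h⁻¹ * ‖iteratedFDeriv ℝ i (fun y => Real.exp (A y / h)) x‖ := by
        intro i
        have hconv : (fun y => h⁻¹ * Real.exp (A y / h))
            = fun y => h⁻¹ • Real.exp (A y / h) := by
          funext y; rw [smul_eq_mul]
        rw [hconv, iteratedFDeriv_const_smul_apply' (hcu.of_le (by exact_mod_cast le_top)).contDiffAt, norm_smul,
          Real.norm_eq_abs, abs_of_pos (inv_pos.2 hh)]
      have termbound : ∀ i ∈ Finset.range (k + 1),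
          (k.choose i : ℝ) * ‖iteratedFDeriv ℝ i (fun y => h⁻¹ * Real.exp (A y / h)) x‖
            * ‖iteratedFDeriv ℝ (k - i) (fderiv ℝ A) x‖
          ≤ c i * (h ^ (-((k + 1 : ℕ) : ℝ) / 2) * E2) := by
        intro i hi
        rw [Finset.mem_range, Nat.lt_succ_iff] at hi
        rw [hsnorm i]
        rcases eq_or_lt_of_le hi with rfl | hik2
        · -- i = k : gradient term
          rw [Nat.sub_self, norm_iteratedFDeriv_zero]
          have hsplit : Real.exp (A x / (2 ^ i * h)) = E2 * E2 := by
            rw [hE2, ← Real.exp_add]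
            congr 1
            field_simp
            ring
          have hse : Real.sqrt (-A x) * E2 ≤ 2 ^ (i + 1) * Real.sqrt h := by
            calc Real.sqrt (-A x) * E2 ≤ Real.sqrt (2 ^ (i + 1) * h) :=
                  sqrt_neg_exp (hneg x) (by positivity)
              _ = Real.sqrt (2 ^ (i + 1)) * Real.sqrt h := Real.sqrt_mul (by positivity) h
              _ ≤ 2 ^ (i + 1) * Real.sqrt h := by
                  have := sqrt_le_self' (a := (2:ℝ) ^ (i + 1)) (one_le_pow₀ (by norm_num))
                  exact mul_le_mul_of_nonneg_right this (Real.sqrt_nonneg h)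
          have hpow : h⁻¹ * h ^ (-(i : ℝ) / 2) * Real.sqrt h
              = h ^ (-((i + 1 : ℕ) : ℝ) / 2) := by
            rw [show (-((i + 1 : ℕ) : ℝ) / 2) = (-1) + (-(i : ℝ) / 2) + 1/2 by push_cast; ring,
              Real.rpow_add hh, Real.rpow_add hh, Real.rpow_neg_one,
              Real.sqrt_eq_rpow]
          calc (i.choose i : ℝ)
              * (h⁻¹ * ‖iteratedFDeriv ℝ i (fun y => Real.exp (A y / h)) x‖)
              * ‖fderiv ℝ A x‖
              ≤ 1 * (h⁻¹ * (C * h ^ (-(i : ℝ) / 2) * Real.exp (A x / (2 ^ i * h))))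
                * (M * Real.sqrt (-A x)) := by
                rw [Nat.choose_self, Nat.cast_one]
                have hb1 := IH i le_rfl h hh hh1 x
                have hb2 := gb x
                gcongr
            _ = (C * M * (h⁻¹ * h ^ (-(i : ℝ) / 2))) * E2 * (Real.sqrt (-A x) * E2) := by
                rw [hsplit]; ring
            _ ≤ (C * M * (h⁻¹ * h ^ (-(i : ℝ) / 2))) * E2 * (2 ^ (i + 1) * Real.sqrt h) := by
                have hnn : (0:ℝ) ≤ (C * M * (h⁻¹ * h ^ (-(i : ℝ) / 2))) * E2 := by positivity
                exact mul_le_mul_of_nonneg_left hse hnn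
            _ = (C * M * 2 ^ (i + 1)) * (h⁻¹ * h ^ (-(i : ℝ) / 2) * Real.sqrt h) * E2 := by
                ring
            _ = c i * (h ^ (-((i + 1 : ℕ) : ℝ) / 2) * E2) := by
                have hci : c i = C * M * 2 ^ (i + 1) := by simp [hc]
                rw [hci, ← hpow]; ring
        · -- i < k : bounded higher derivative term
          rw [show k - i = (k - i - 1) + 1 by omega, norm_iteratedFDeriv_fderiv,
            show (k - i - 1) + 1 + 1 = k - i + 1 by omega]
          have hj2 : 2 ≤ k - i + 1 := by omega
          have hEmono : Real.exp (A x / (2 ^ i * h)) ≤ E2 := by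
            rw [hE2]
            apply Real.exp_le_exp.2
            apply div_neg_mono (hneg x) (by positivity)
            have : (2:ℝ) ^ i ≤ 2 ^ (k + 1) := by
              apply pow_le_pow_right₀ (by norm_num) (by omega)
            nlinarith
          have hpow2 : h⁻¹ * h ^ (-(i : ℝ) / 2) ≤ h ^ (-((k + 1 : ℕ) : ℝ) / 2) := by
            rw [← Real.rpow_neg_one h, ← Real.rpow_add hh]
            apply Real.rpow_le_rpow_of_exponent_ge hh hh1
            have : (i : ℝ) + 1 ≤ (k : ℝ) := by exact_mod_cast hik2
            push_cast
            linarith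
          calc (k.choose i : ℝ)
              * (h⁻¹ * ‖iteratedFDeriv ℝ i (fun y => Real.exp (A y / h)) x‖)
              * ‖iteratedFDeriv ℝ (k - i + 1) A x‖
              ≤ (k.choose i : ℝ)
                * (h⁻¹ * (C * h ^ (-(i : ℝ) / 2) * Real.exp (A x / (2 ^ i * h))))
                * B (k - i + 1) := by
                have hb1 := IH i (by omega) h hh hh1 x
                have hb2 := hBb (k - i + 1) hj2 x
                gcongr
            _ ≤ (k.choose i : ℝ)
                * (h⁻¹ * (C * h ^ (-(i : ℝ) / 2) * E2)) * B (k - i + 1) := by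
                have h1 : h⁻¹ * (C * h ^ (-(i : ℝ) / 2) * Real.exp (A x / (2 ^ i * h)))
                    ≤ h⁻¹ * (C * h ^ (-(i : ℝ) / 2) * E2) := by
                  apply mul_le_mul_of_nonneg_left _ (by positivity)
                  apply mul_le_mul_of_nonneg_left hEmono (by positivity)
                have h2 : (0:ℝ) ≤ B (k - i + 1) := hBnn _
                have h3 : (0:ℝ) ≤ (k.choose i : ℝ) := Nat.cast_nonneg _
                exact mul_le_mul_of_nonneg_right (mul_le_mul_of_nonneg_left h1 h3) h2
            _ = ((k.choose i : ℝ) * C * B (k - i + 1)) * (h⁻¹ * h ^ (-(i : ℝ) / 2)) * E2 := by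
                ring
            _ ≤ ((k.choose i : ℝ) * C * B (k - i + 1)) * h ^ (-((k + 1 : ℕ) : ℝ) / 2) * E2 := by
                have hnn : (0:ℝ) ≤ (k.choose i : ℝ) * C * B (k - i + 1) := by
                  have := hBnn (k - i + 1)
                  positivity
                exact mul_le_mul_of_nonneg_right
                  (mul_le_mul_of_nonneg_left hpow2 hnn) E2pos.le
            _ = c i * (h ^ (-((k + 1 : ℕ) : ℝ) / 2) * E2) := by
                have hci : c i = (k.choose i : ℝ) * C * B (k - i + 1) := by
                  simp [hc, Nat.ne_of_lt hik2]
                rw [hci]; ring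
      calc ‖iteratedFDeriv ℝ (k + 1) (fun y => Real.exp (A y / h)) x‖
          = ‖iteratedFDeriv ℝ k (fderiv ℝ (fun y => Real.exp (A y / h))) x‖ :=
            (norm_iteratedFDeriv_fderiv).symm
        _ = ‖iteratedFDeriv ℝ k
              (fun y => (h⁻¹ * Real.exp (A y / h)) • fderiv ℝ A y) x‖ := by rw [hfd]
        _ ≤ ∑ i ∈ Finset.range (k + 1), (k.choose i : ℝ)
              * ‖iteratedFDeriv ℝ i (fun y => h⁻¹ * Real.exp (A y / h)) x‖
              * ‖iteratedFDeriv ℝ (k - i) (fderiv ℝ A) x‖ :=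
            norm_iteratedFDeriv_smul_le hs hg x (by exact_mod_cast le_top)
        _ ≤ ∑ i ∈ Finset.range (k + 1), c i * (h ^ (-((k + 1 : ℕ) : ℝ) / 2) * E2) :=
            Finset.sum_le_sum termbound
        _ = S * (h ^ (-((k + 1 : ℕ) : ℝ) / 2) * E2) := by rw [← Finset.sum_mul]
        _ ≤ max C (S + 1) * (h ^ (-((k + 1 : ℕ) : ℝ) / 2) * E2) := by
            have h1 : S ≤ max C (S + 1) := le_trans (by linarith) (le_max_right _ _)
            have h2 : (0:ℝ) ≤ h ^ (-((k + 1 : ℕ) : ℝ) / 2) * E2 := by positivity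
            exact mul_le_mul_of_nonneg_right h1 h2
        _ = max C (S + 1) * h ^ (-((k + 1 : ℕ) : ℝ) / 2) * E2 := by ring


/-- If `A ≤ 0` is smooth with all derivatives of order ≥ 2 uniformly bounded, then
`exp(A/h)` lies in the exotic symbol class `S_{1/2}`: every derivative of order `k`
is `O(h^{-k/2})` uniformly for `h ∈ (0,1]`. -/
theorem stmt1 {d : ℕ} (A : EuclideanSpace ℝ (Fin d) → ℝ)
    (hA : ContDiff ℝ (⊤ : ℕ∞) A) (hneg : ∀ x, A x ≤ 0)
    (hbd : ∀ j : ℕ, 2 ≤ j → ∃ K : ℝ, ∀ x, ‖iteratedFDeriv ℝ j A x‖ ≤ K) :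
    ∀ k : ℕ, ∃ C : ℝ, 0 < C ∧ ∀ h : ℝ, 0 < h → h ≤ 1 → ∀ x,
      ‖iteratedFDeriv ℝ k (fun y => Real.exp (A y / h)) x‖ ≤ C * h ^ (-(k : ℝ) / 2) := by
  obtain ⟨K₂, hK₂⟩ := hbd 2 (by norm_num)
  have hKg : (0:ℝ) < max K₂ 1 := lt_max_of_lt_right one_pos
  have h2 : ∀ x, ‖iteratedFDeriv ℝ 2 A x‖ ≤ max K₂ 1 :=
    fun x => (hK₂ x).trans (le_max_left _ _)
  have gb := grad_bound A hA hneg hKg h2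
  intro k
  obtain ⟨C, hC, hCb⟩ := key2 A hA hneg hbd (Real.sqrt_nonneg (4 * max K₂ 1)) gb k
  refine ⟨C, hC, ?_⟩
  intro h hh hh1 x
  calc ‖iteratedFDeriv ℝ k (fun y => Real.exp (A y / h)) x‖
      ≤ C * h ^ (-(k : ℝ) / 2) * Real.exp (A x / (2 ^ k * h)) :=
        hCb k le_rfl h hh hh1 x
    _ ≤ C * h ^ (-(k : ℝ) / 2) * 1 := by
        have hexp : Real.exp (A x / (2 ^ k * h)) ≤ 1 := by
          rw [show (1:ℝ) = Real.exp 0 by simp]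
          exact Real.exp_le_exp.2 (div_nonpos_of_nonpos_of_nonneg (hneg x) (by positivity))
        have hnn : (0:ℝ) ≤ C * h ^ (-(k : ℝ) / 2) := by positivity
        exact mul_le_mul_of_nonneg_left hexp hnn
    _ = C * h ^ (-(k : ℝ) / 2) := mul_one _
end

section
/- (Resolvent bound from propagator decay.) Let P be a (possibly non-self-adjoint) bounded operator on a Hilbert space generating a semigroup U₁(t) satisfying: ‖U₁(t)‖ ≤ 1 + Ch for 0 ≤ t ≤ T_E, ‖U₁(t)‖ ≤ C₀ h^{-n/2} e^{-λt} for T_E ≤ t ≤ T_M, and ‖U₁(t)‖ ≤ h^{M/C₀} for t ≥ T_M, where T_E = n log(1/h)/(2λ) and T_M = M log(1/h). Then for Im z > 0, the integral (1/h)∫₀^∞ U₁(t) e^{itz/h} dt converges in operator norm and its norm is bounded by T_E(h)/h + C/(hλ + Im z) + h^{M/C₀}/Im z. -/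
open MeasureTheory Set Real

/-!
The integrand has norm `e^{-t Im z / h} ‖U₁(t)‖`, so the integral of its norm splits into three
pieces. Up to the Ehrenfest time the integrand is bounded, giving `(1 + Ch) T_E`. Between `T_E`
and `T_M` it is at most `C₀ h^{-n/2} e^{-(λ + Im z / h) t}`, whose tail integral from `T_E` is at
most `C₀ / (λ + Im z / h)` because `e^{-λ T_E} = h^{n/2}` exactly cancels the prefactor. After
`T_M` the bound `h^{M/C₀} e^{-t Im z / h}` integrates to at most `h^{M/C₀} h / Im z`.
-/

lemma integral_exp_neg_mul_Ioi {a : ℝ} (ha : 0 < a) (c : ℝ) :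
    ∫ t in Ioi c, exp (-a * t) = exp (-a * c) / a := by
  rw [integral_exp_mul_Ioi (neg_neg_of_pos ha), neg_div_neg_eq]

lemma integrableOn_and_setIntegral_norm_le_of_norm_le {α E : Type*} [MeasurableSpace α]
    [NormedAddCommGroup E] {μ : Measure α} {f : α → E} {g : α → ℝ} {s : Set α}
    (hs : MeasurableSet s) (hf : AEStronglyMeasurable f (μ.restrict s))
    (hg : IntegrableOn g s μ) (hfg : ∀ t ∈ s, ‖f t‖ ≤ g t) :
    IntegrableOn f s μ ∧ ∫ t in s, ‖f t‖ ∂μ ≤ ∫ t in s, g t ∂μ := by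
  have hfi : IntegrableOn f s μ := hg.mono' hf (ae_restrict_of_forall_mem hs hfg)
  exact ⟨hfi, setIntegral_mono_on hfi.norm hg hs hfg⟩

lemma norm_cexp_I_mul_div (t h : ℝ) (z : ℂ) :
    ‖Complex.exp (Complex.I * t * z / h)‖ = exp (-(z.im / h) * t) := by
  rw [Complex.norm_exp]
  congr 1
  simp [Complex.div_ofReal_re]
  ring

lemma exp_neg_mul_ehrenfest_time {h lam : ℝ} (n : ℝ) (hh : 0 < h) (hlam : lam ≠ 0) :
    exp (-lam * (n * log (1 / h) / (2 * lam))) = h ^ (n / 2) := by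
  rw [rpow_def_of_pos hh, one_div, log_inv]
  congr 1
  field_simp

lemma rpow_neg_div_two_mul_exp_ehrenfest_time_le_one {h lam b n : ℝ} (hh : 0 < h)
    (hlam : lam ≠ 0) (hb : 0 ≤ b) (hT : 0 ≤ n * log (1 / h) / (2 * lam)) :
    h ^ (-n / 2) * exp (-(lam + b) * (n * log (1 / h) / (2 * lam))) ≤ 1 := by
  rw [neg_add, add_mul, exp_add, exp_neg_mul_ehrenfest_time n hh hlam, ← mul_assoc, neg_div,
    rpow_neg hh.le, inv_mul_cancel₀ (by positivity), one_mul, exp_le_one_iff]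
  nlinarith

theorem integrableOn_Ioi_and_integral_norm_le_of_three_regimes {E : Type*}
    [NormedAddCommGroup E] {f : ℝ → E} (hf : AEStronglyMeasurable f (volume.restrict (Ioi 0)))
    {T₁ T₂ c₁ c₂ c₃ a b : ℝ} (hT₁ : 0 ≤ T₁) (hT₁₂ : T₁ ≤ T₂) (hc₂ : 0 ≤ c₂) (ha : 0 < a)
    (hb : 0 < b) (h₁ : ∀ t ∈ Ioc 0 T₁, ‖f t‖ ≤ c₁)
    (h₂ : ∀ t ∈ Ioc T₁ T₂, ‖f t‖ ≤ c₂ * exp (-a * t))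
    (h₃ : ∀ t ∈ Ioi T₂, ‖f t‖ ≤ c₃ * exp (-b * t)) :
    IntegrableOn f (Ioi 0) ∧
      ∫ t in Ioi 0, ‖f t‖ ≤ c₁ * T₁ + c₂ * exp (-a * T₁) / a + c₃ * exp (-b * T₂) / b := by
  have hsplit : Ioi (0 : ℝ) = Ioc 0 T₁ ∪ (Ioc T₁ T₂ ∪ Ioi T₂) := by
    rw [Ioc_union_Ioi_eq_Ioi hT₁₂, Ioc_union_Ioi_eq_Ioi hT₁]
  have hf' : ∀ s ⊆ Ioi (0 : ℝ), AEStronglyMeasurable f (volume.restrict s) :=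
    fun s hs => hf.mono_set hs
  have hexp₂ : IntegrableOn (fun t => c₂ * exp (-a * t)) (Ioi T₁) :=
    (exp_neg_integrableOn_Ioi T₁ ha).const_mul c₂
  obtain ⟨i₁, b₁⟩ := integrableOn_and_setIntegral_norm_le_of_norm_le measurableSet_Ioc
    (hf' _ Ioc_subset_Ioi_self) (integrableOn_const measure_Ioc_lt_top.ne) h₁
  obtain ⟨i₂, b₂⟩ := integrableOn_and_setIntegral_norm_le_of_norm_le measurableSet_Ioc
    (hf' _ fun t ht => hT₁.trans_lt ht.1) (hexp₂.mono_set Ioc_subset_Ioi_self) h₂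
  obtain ⟨i₃, b₃⟩ := integrableOn_and_setIntegral_norm_le_of_norm_le measurableSet_Ioi
    (hf' _ fun t ht => (hT₁.trans hT₁₂).trans_lt ht)
    ((exp_neg_integrableOn_Ioi T₂ hb).const_mul c₃) h₃
  have e₁ : ∫ t in Ioc 0 T₁, c₁ = c₁ * T₁ := by
    simp [hT₁, mul_comm]
  have e₂ : ∫ t in Ioc T₁ T₂, c₂ * exp (-a * t) ≤ c₂ * exp (-a * T₁) / a := by
    calc ∫ t in Ioc T₁ T₂, c₂ * exp (-a * t) ≤ ∫ t in Ioi T₁, c₂ * exp (-a * t) :=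
          setIntegral_mono_set hexp₂ (ae_of_all _ fun t => by positivity)
            Ioc_subset_Ioi_self.eventuallyLE
      _ = c₂ * exp (-a * T₁) / a := by
          rw [integral_const_mul, integral_exp_neg_mul_Ioi ha, mul_div_assoc]
  have e₃ : ∫ t in Ioi T₂, c₃ * exp (-b * t) = c₃ * exp (-b * T₂) / b := by
    rw [integral_const_mul, integral_exp_neg_mul_Ioi hb, mul_div_assoc]
  refine ⟨hsplit ▸ i₁.union (i₂.union i₃), ?_⟩
  have hdisj : Disjoint (Ioc 0 T₁) (Ioc T₁ T₂ ∪ Ioi T₂) := by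
    rw [Ioc_union_Ioi_eq_Ioi hT₁₂]
    exact Ioc_disjoint_Ioi le_rfl
  rw [hsplit, setIntegral_union hdisj (measurableSet_Ioc.union measurableSet_Ioi) i₁.norm
      (i₂.union i₃).norm, setIntegral_union (Ioc_disjoint_Ioi le_rfl) measurableSet_Ioi
      i₂.norm i₃.norm]
  linarith

theorem stmt13_general {H : Type*} [NormedAddCommGroup H] [InnerProductSpace ℂ H]
    (h lam C C₀ M n : ℝ) (hh : 0 < h) (hh1 : h ≤ 1) (hlam : 0 < lam)
    (hC₀ : 0 < C₀) (hn : 0 < n)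
    (U₁ : ℝ → H →L[ℂ] H) (hcont : Continuous U₁)
    (TE TM : ℝ) (hTE : TE = n * Real.log (1 / h) / (2 * lam))
    (hU1 : ∀ t : ℝ, 0 ≤ t → t ≤ TE → ‖U₁ t‖ ≤ 1 + C * h)
    (hU2 : ∀ t : ℝ, TE ≤ t → t ≤ TM → ‖U₁ t‖ ≤ C₀ * h ^ (-n / 2) * Real.exp (-lam * t))
    (hU3 : ∀ t : ℝ, TM ≤ t → ‖U₁ t‖ ≤ h ^ (M / C₀))
    (z : ℂ) (hz : 0 < z.im) :
    IntegrableOn (fun t : ℝ => Complex.exp (Complex.I * (t : ℂ) * z / (h : ℂ)) • U₁ t)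
        (Set.Ioi (0 : ℝ)) ∧
      ‖(1 / h : ℝ) •
          ∫ t in Set.Ioi (0 : ℝ), Complex.exp (Complex.I * (t : ℂ) * z / (h : ℂ)) • U₁ t‖ ≤
        (1 + C * h) * TE / h + C₀ / (h * lam + z.im) + h ^ (M / C₀) / z.im := by
  set b := z.im / h
  have hb : 0 < b := div_pos hz hh
  have hTE0 : 0 ≤ TE := by
    have := log_nonneg (one_le_one_div hh hh1)
    rw [hTE]
    positivity
  have hnorm : ∀ t : ℝ, ‖Complex.exp (Complex.I * t * z / h) • U₁ t‖ = exp (-b * t) * ‖U₁ t‖ :=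
    fun t => by rw [norm_smul, norm_cexp_I_mul_div]
  have hf : Continuous fun t : ℝ => Complex.exp (Complex.I * t * z / h) • U₁ t := by fun_prop
  have hdecay : ∀ t, 0 ≤ t → exp (-b * t) ≤ 1 := fun t ht => exp_le_one_iff.2 (by nlinarith)
  obtain ⟨hint, hbound⟩ := integrableOn_Ioi_and_integral_norm_le_of_three_regimes
    (T₁ := TE) (T₂ := max TE TM) (c₁ := 1 + C * h) (c₂ := C₀ * h ^ (-n / 2))
    (c₃ := h ^ (M / C₀)) hf.aestronglyMeasurable hTE0
    (le_max_left _ _) (by positivity) (add_pos hlam hb) hb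
    (fun t ht => by
      rw [hnorm]
      exact (mul_le_of_le_one_left (norm_nonneg _) (hdecay t ht.1.le)).trans
        (hU1 t ht.1.le ht.2))
    (fun t ht => by
      rw [hnorm, neg_add, add_mul, exp_add, mul_comm (exp _), ← mul_assoc]
      exact mul_le_mul_of_nonneg_right
        (hU2 t ht.1.le ((le_max_iff.1 ht.2).resolve_left ht.1.not_ge)) (exp_nonneg _))
    (fun t ht => by
      rw [hnorm, mul_comm]
      exact mul_le_mul_of_nonneg_right (hU3 t ((le_max_right _ _).trans ht.le)) (exp_nonneg _))
  refine ⟨hint, ?_⟩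
  have hcancel : h ^ (-n / 2) * exp (-(lam + b) * TE) ≤ 1 :=
    hTE ▸ rpow_neg_div_two_mul_exp_ehrenfest_time_le_one hh hlam.ne' hb.le (hTE ▸ hTE0)
  calc _ ≤ 1 / h * ∫ t in Ioi 0, ‖Complex.exp (Complex.I * (t : ℝ) * z / h) • U₁ t‖ := by
        rw [norm_smul, norm_of_nonneg (by positivity)]
        gcongr
        exact norm_integral_le_integral_norm _
    _ ≤ 1 / h * ((1 + C * h) * TE + C₀ * h ^ (-n / 2) * exp (-(lam + b) * TE) / (lam + b)
          + h ^ (M / C₀) * exp (-b * max TE TM) / b) := by gcongr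
    _ ≤ 1 / h * ((1 + C * h) * TE + C₀ / (lam + b) + h ^ (M / C₀) / b) := by
        gcongr
        · rw [mul_assoc]
          exact mul_le_of_le_one_right hC₀.le hcancel
        · exact mul_le_of_le_one_right (by positivity) (hdecay _ (hTE0.trans (le_max_left _ _)))
    _ = _ := by
        simp only [b]
        field_simp

/-- Resolvent bound from propagator decay (core of Lemma 8.3): if the propagator `U₁(t)`
satisfies `‖U₁(t)‖ ≤ 1 + Ch` up to the Ehrenfest time `T_E = n log(1/h)/(2λ)`,
`‖U₁(t)‖ ≤ C₀ h^{-n/2} e^{-λt}` for `T_E ≤ t ≤ T_M = M log(1/h)`, and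
`‖U₁(t)‖ ≤ h^{M/C₀}` afterwards, then for `Im z > 0` the integral
`(1/h)∫₀^∞ U₁(t) e^{itz/h} dt` converges in operator norm, with norm at most
`(1+Ch)T_E/h + C₀/(hλ + Im z) + h^{M/C₀}/Im z`. -/
theorem stmt13 {H : Type*} [NormedAddCommGroup H] [InnerProductSpace ℂ H] [CompleteSpace H]
    (h lam C C₀ M n : ℝ) (hh : 0 < h) (hh1 : h ≤ 1) (hlam : 0 < lam) (hC : 0 < C)
    (hC₀ : 0 < C₀) (hM : 0 < M) (hn : 0 < n)
    (U₁ : ℝ → H →L[ℂ] H) (hcont : Continuous U₁)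
    (TE TM : ℝ) (hTE : TE = n * Real.log (1 / h) / (2 * lam))
    (hTM : TM = M * Real.log (1 / h))
    (hU1 : ∀ t : ℝ, 0 ≤ t → t ≤ TE → ‖U₁ t‖ ≤ 1 + C * h)
    (hU2 : ∀ t : ℝ, TE ≤ t → t ≤ TM → ‖U₁ t‖ ≤ C₀ * h ^ (-n / 2) * Real.exp (-lam * t))
    (hU3 : ∀ t : ℝ, TM ≤ t → ‖U₁ t‖ ≤ h ^ (M / C₀))
    (z : ℂ) (hz : 0 < z.im) :
    IntegrableOn (fun t : ℝ => Complex.exp (Complex.I * (t : ℂ) * z / (h : ℂ)) • U₁ t)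
        (Set.Ioi (0 : ℝ)) ∧
      ‖(1 / h : ℝ) •
          ∫ t in Set.Ioi (0 : ℝ), Complex.exp (Complex.I * (t : ℂ) * z / (h : ℂ)) • U₁ t‖ ≤
        (1 + C * h) * TE / h + C₀ / (h * lam + z.im) + h ^ (M / C₀) / z.im :=
  stmt13_general h lam C C₀ M n hh hh1 hlam hC₀ hn U₁ hcont TE TM hTE hU1 hU2 hU3 z hz
end

section
/- Let χ ∈ C^∞(ℝ) satisfy χ(t) = 0 for |t| > T, χ(t) = t for |t| < αT, |χ(t)| ≤ 2αT, and χ'(t) ≥ -2α. Let ψ ∈ C_c^∞(ℝ;[0,1]) with ψ = 1 on [-1,1], ψ = 0 outside [-2,2]. Given an escape function G₀ with H_p G₀ ≥ 0, H_p G₀ ≤ C on a neighbourhood of the energy shell, and |H_p(|x|)| ≤ C₁ there, define G(ρ) = χ(G₀(ρ))ψ(p(ρ)/δ)ψ(|x(ρ)|/R). Then H_p G ≥ -C₀α(1 + T/R) everywhere, H_p G ≥ 0 on the region {|x| < R, |G₀| ≤ αT}, and H_p G ≥ 1 where additionally H_p G₀ ≥ 1; moreover G is compactly supported. -/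
/-!
Along the flow `p` is conserved, so `ψ(p/δ)` is constant and the Leibniz rule gives
`H_pG = χ'(G₀) H_pG₀ ψ(p/δ) ψ(|x|/R) + χ(G₀) ψ(p/δ) ψ'(|x|/R) H_p|x| / R`.
The first term is at least `-2αC` because `χ' ≥ -2α` and `0 ≤ H_pG₀ ≤ C`; the second is
`O(αT/R)` because `|χ| ≤ 2αT`. Where `|x| < R` and `|G₀| < αT` we have `χ' = 1` and
`ψ' = 0`, so only `H_pG₀ ψ(p/δ) ≥ 0` survives. Compact support comes from the two cutoffs.
-/

open Filter Topology Set

theorem HasDerivAt.eq_of_forall_abs_lt_eq {f g : ℝ → ℝ} {f' g' a t : ℝ}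
    (hf : HasDerivAt f f' t) (hg : HasDerivAt g g' t) (hfg : ∀ s, |s| < a → f s = g s)
    (ht : |t| < a) : f' = g' :=
  hf.unique <| hg.congr_of_eventuallyEq <|
    eventually_of_mem ((isOpen_lt continuous_abs continuous_const).mem_nhds ht) hfg

section Cutoff

variable {ψ ψ' : ℝ → ℝ} {a s : ℝ}

theorem cutoff_div_eq_one (hψ1 : ∀ t, |t| ≤ 1 → ψ t = 1) (ha : 0 < a) (hs : |s| ≤ a) :
    ψ (s / a) = 1 :=
  hψ1 _ (by rwa [abs_div, abs_of_pos ha, div_le_one ha])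

theorem cutoff_div_eq_zero (hψ0 : ∀ t, 2 ≤ |t| → ψ t = 0) (ha : 0 < a) (hs : 2 * a ≤ |s|) :
    ψ (s / a) = 0 :=
  hψ0 _ (by rwa [abs_div, abs_of_pos ha, le_div_iff₀ ha])

theorem cutoff_deriv_div_eq_zero (hψd : ∀ t, HasDerivAt ψ (ψ' t) t)
    (hψ1 : ∀ t, |t| ≤ 1 → ψ t = 1) (ha : 0 < a) (hs : |s| < a) : ψ' (s / a) = 0 :=
  (hψd _).eq_of_forall_abs_lt_eq (hasDerivAt_const _ 1) (fun t ht => hψ1 t ht.le)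
    (by rwa [abs_div, abs_of_pos ha, div_lt_one ha])

end Cutoff

theorem hasDerivAt_cutoff_product_along_flow {X : Type*} {Φ : ℝ → X → X} {G₀ p r : X → ℝ}
    {χ χ' ψ ψ' : ℝ → ℝ} {δ R LG₀ Lr : ℝ} {ρ : X}
    (hχd : ∀ t, HasDerivAt χ (χ' t) t) (hψd : ∀ t, HasDerivAt ψ (ψ' t) t)
    (hΦ0 : Φ 0 ρ = ρ) (hpinv : ∀ t, p (Φ t ρ) = p ρ)
    (hG₀L : HasDerivAt (fun t => G₀ (Φ t ρ)) LG₀ 0)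
    (hrL : HasDerivAt (fun t => r (Φ t ρ)) Lr 0) :
    HasDerivAt (fun t => χ (G₀ (Φ t ρ)) * ψ (p (Φ t ρ) / δ) * ψ (r (Φ t ρ) / R))
      (χ' (G₀ ρ) * LG₀ * ψ (p ρ / δ) * ψ (r ρ / R)
        + χ (G₀ ρ) * ψ (p ρ / δ) * (ψ' (r ρ / R) * (Lr / R))) 0 := by
  have hχG₀ : HasDerivAt (fun t => χ (G₀ (Φ t ρ))) (χ' (G₀ ρ) * LG₀) 0 := by
    simpa [hΦ0, Function.comp_def] using (hχd (G₀ (Φ 0 ρ))).comp 0 hG₀L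
  have hψr : HasDerivAt (fun t => ψ (r (Φ t ρ) / R)) (ψ' (r ρ / R) * (Lr / R)) 0 := by
    simpa [hΦ0, Function.comp_def] using (hψd (r (Φ 0 ρ) / R)).comp 0 (hrL.div_const R)
  simp only [hpinv]
  simpa [hΦ0] using (hχG₀.mul_const (ψ (p ρ / δ))).fun_mul hψr

theorem neg_le_mul_of_mem_Icc {x b w : ℝ} (hb : 0 ≤ b) (hx : -b ≤ x) (hw : w ∈ Icc 0 1) :
    -b ≤ x * w := by
  rcases le_or_gt 0 x with hx0 | hx0
  · linarith [mul_nonneg hx0 hw.1]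
  · nlinarith [hw.2]

theorem neg_le_leibniz_sum {a L u v c d l α T C Cψ C₁ R K : ℝ}
    (hα : 0 ≤ α) (hT : 0 ≤ T) (hR : 0 < R) (hC : 0 ≤ C) (hCψ : 0 ≤ Cψ) (hC₁ : 0 ≤ C₁)
    (hK : 2 * C + 2 * Cψ * C₁ ≤ K)
    (ha : -(2 * α) ≤ a) (hL : L ∈ Icc 0 C) (hu : u ∈ Icc 0 1) (hv : v ∈ Icc 0 1)
    (hc : |c| ≤ 2 * α * T) (hd : |d| ≤ Cψ) (hl : |l| ≤ C₁) :
    -(K * α * (1 + T / R)) ≤ a * L * u * v + c * u * (d * (l / R)) := by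
  have hfirst : -(2 * α * C) ≤ a * L * u * v := by
    have haL : -(2 * α * C) ≤ a * L := by nlinarith [hL.1, hL.2]
    rw [mul_assoc _ u]
    exact neg_le_mul_of_mem_Icc (by positivity) haL
      ⟨mul_nonneg hu.1 hv.1, mul_le_one₀ hu.2 hv.1 hv.2⟩
  have hsecond : |c * u * (d * (l / R))| ≤ 2 * Cψ * C₁ * (α * (T / R)) :=
    calc |c * u * (d * (l / R))| ≤ 2 * α * T * 1 * (Cψ * (C₁ / R)) := by
          rw [abs_mul, abs_mul, abs_mul, abs_div, abs_of_pos hR, abs_of_nonneg hu.1]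
          gcongr
          exacts [hu.1, hu.2]
      _ = 2 * Cψ * C₁ * (α * (T / R)) := by ring
  have hTR : 0 ≤ α * (T / R) := mul_nonneg hα (div_nonneg hT hR.le)
  nlinarith [neg_abs_le (c * u * (d * (l / R))), mul_nonneg hCψ hC₁]

theorem stmt15_general {n : ℕ}
    (χ χ' ψ ψ' : ℝ → ℝ)
    (G₀ p LG₀ Lx LG : (EuclideanSpace ℝ (Fin n) × EuclideanSpace ℝ (Fin n)) → ℝ)
    (Φ : ℝ → (EuclideanSpace ℝ (Fin n) × EuclideanSpace ℝ (Fin n)) →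
      (EuclideanSpace ℝ (Fin n) × EuclideanSpace ℝ (Fin n)))
    (T α δ R C C₁ Cψ : ℝ)
    (hT : 0 < T) (hα : 0 < α) (hδ : 0 < δ) (hR : 0 < R)
    (hC : 0 ≤ C) (hC₁ : 0 ≤ C₁) (hCψ : 0 ≤ Cψ)
    (hχd : ∀ t, HasDerivAt χ (χ' t) t)
    (hχid : ∀ t, |t| < α * T → χ t = t)
    (hχb : ∀ t, |χ t| ≤ 2 * α * T)
    (hχ' : ∀ t, -(2 * α) ≤ χ' t)
    (hψd : ∀ t, HasDerivAt ψ (ψ' t) t)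
    (hψ01 : ∀ t, ψ t ∈ Set.Icc (0 : ℝ) 1)
    (hψ1 : ∀ t, |t| ≤ 1 → ψ t = 1)
    (hψ0 : ∀ t, 2 ≤ |t| → ψ t = 0)
    (hψ'b : ∀ t, |ψ' t| ≤ Cψ)
    (hΦ0 : ∀ ρ, Φ 0 ρ = ρ)
    (hpinv : ∀ t ρ, p (Φ t ρ) = p ρ)
    (hG₀L : ∀ ρ, HasDerivAt (fun t => G₀ (Φ t ρ)) (LG₀ ρ) 0)
    (hxL : ∀ ρ, HasDerivAt (fun t => ‖(Φ t ρ).1‖) (Lx ρ) 0)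
    (hLG₀pos : ∀ ρ, 0 ≤ LG₀ ρ)
    (hLG₀C : ∀ ρ, |p ρ| ≤ 2 * δ → LG₀ ρ ≤ C)
    (hLxC : ∀ ρ, |p ρ| ≤ 2 * δ → |Lx ρ| ≤ C₁)
    (hcompact : IsCompact {ρ : EuclideanSpace ℝ (Fin n) × EuclideanSpace ℝ (Fin n) |
      ‖ρ.1‖ ≤ 2 * R ∧ |p ρ| ≤ 2 * δ})
    (hLG : ∀ ρ, HasDerivAt
      (fun t => χ (G₀ (Φ t ρ)) * ψ (p (Φ t ρ) / δ) * ψ (‖(Φ t ρ).1‖ / R)) (LG ρ) 0) :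
    ∃ C₀ : ℝ, 0 < C₀ ∧
      (∀ ρ, -(C₀ * α * (1 + T / R)) ≤ LG ρ) ∧
      (∀ ρ, ‖ρ.1‖ < R → |G₀ ρ| < α * T → 0 ≤ LG ρ) ∧
      (∀ ρ, ‖ρ.1‖ < R → |G₀ ρ| < α * T → |p ρ| ≤ δ → 1 ≤ LG₀ ρ → 1 ≤ LG ρ) ∧
      HasCompactSupport (fun ρ : EuclideanSpace ℝ (Fin n) × EuclideanSpace ℝ (Fin n) =>
        χ (G₀ ρ) * ψ (p ρ / δ) * ψ (‖ρ.1‖ / R)) := by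
  have hLG_eq : ∀ ρ, LG ρ = χ' (G₀ ρ) * LG₀ ρ * ψ (p ρ / δ) * ψ (‖ρ.1‖ / R)
      + χ (G₀ ρ) * ψ (p ρ / δ) * (ψ' (‖ρ.1‖ / R) * (Lx ρ / R)) := fun ρ =>
    (hLG ρ).unique <| hasDerivAt_cutoff_product_along_flow (r := fun ρ => ‖ρ.1‖)
      hχd hψd (hΦ0 ρ) (fun t => hpinv t ρ) (hG₀L ρ) (hxL ρ)
  have hinner : ∀ ρ, ‖ρ.1‖ < R → |G₀ ρ| < α * T →
      LG ρ = LG₀ ρ * ψ (p ρ / δ) := fun ρ hx hg => by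
    have hx' : |‖ρ.1‖| < R := by rwa [abs_norm]
    rw [hLG_eq, (hχd _).eq_of_forall_abs_lt_eq (hasDerivAt_id _) hχid hg,
      cutoff_deriv_div_eq_zero hψd hψ1 hR hx', cutoff_div_eq_one hψ1 hR hx'.le]
    ring
  refine ⟨2 * C + 2 * Cψ * C₁ + 1, by positivity, fun ρ => ?_,
    fun ρ hx hg => ?_, fun ρ hx hg hp h1 => ?_, ?_⟩
  · rw [hLG_eq]
    by_cases hp : |p ρ| ≤ 2 * δ
    · exact neg_le_leibniz_sum hα.le hT.le hR hC hCψ hC₁ (le_add_of_nonneg_right zero_le_one)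
        (hχ' _) ⟨hLG₀pos ρ, hLG₀C ρ hp⟩ (hψ01 _) (hψ01 _) (hχb _) (hψ'b _) (hLxC ρ hp)
    · rw [cutoff_div_eq_zero hψ0 hδ (not_le.mp hp).le]
      simp only [mul_zero, zero_mul, add_zero, Left.neg_nonpos_iff]
      positivity
  · rw [hinner ρ hx hg]
    exact mul_nonneg (hLG₀pos ρ) (hψ01 _).1
  · rwa [hinner ρ hx hg, cutoff_div_eq_one hψ1 hδ hp, mul_one]
  · refine HasCompactSupport.intro hcompact fun ρ hρ => ?_
    rcases not_and_or.mp hρ with hx | hp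
    · rw [cutoff_div_eq_zero hψ0 hR (by rw [abs_norm]; exact (not_le.mp hx).le), mul_zero]
    · rw [cutoff_div_eq_zero hψ0 hδ (not_le.mp hp).le, mul_zero, zero_mul]

/-- Construction of the compactly supported escape function (Lemma 6.1): with
`G(ρ) = χ(G₀(ρ))·ψ(p(ρ)/δ)·ψ(|x(ρ)|/R)` and `H_p f` the Lie derivative of `f` along the
Hamiltonian flow `Φ`, one has `H_pG ≥ -C₀α(1+T/R)` everywhere, `H_pG ≥ 0` on
`{|x| < R, |G₀| < αT}`, `H_pG ≥ 1` where additionally `|p| ≤ δ` and `H_pG₀ ≥ 1`, and `G`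
is compactly supported. -/
theorem stmt15 {n : ℕ}
    (χ χ' ψ ψ' : ℝ → ℝ)
    (G₀ p LG₀ Lx LG : (EuclideanSpace ℝ (Fin n) × EuclideanSpace ℝ (Fin n)) → ℝ)
    (Φ : ℝ → (EuclideanSpace ℝ (Fin n) × EuclideanSpace ℝ (Fin n)) →
      (EuclideanSpace ℝ (Fin n) × EuclideanSpace ℝ (Fin n)))
    (T α δ R C C₁ Cψ : ℝ)
    (hT : 0 < T) (hα : 0 < α) (hδ : 0 < δ) (hR : 0 < R)
    (hC : 0 ≤ C) (hC₁ : 0 ≤ C₁) (hCψ : 0 ≤ Cψ)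
    (hχd : ∀ t, HasDerivAt χ (χ' t) t)
    (hχ0 : ∀ t, T < |t| → χ t = 0)
    (hχid : ∀ t, |t| < α * T → χ t = t)
    (hχb : ∀ t, |χ t| ≤ 2 * α * T)
    (hχ' : ∀ t, -(2 * α) ≤ χ' t)
    (hψd : ∀ t, HasDerivAt ψ (ψ' t) t)
    (hψ01 : ∀ t, ψ t ∈ Set.Icc (0 : ℝ) 1)
    (hψ1 : ∀ t, |t| ≤ 1 → ψ t = 1)
    (hψ0 : ∀ t, 2 ≤ |t| → ψ t = 0)
    (hψ'b : ∀ t, |ψ' t| ≤ Cψ)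
    (hΦ0 : ∀ ρ, Φ 0 ρ = ρ)
    (hpinv : ∀ t ρ, p (Φ t ρ) = p ρ)
    (hG₀L : ∀ ρ, HasDerivAt (fun t => G₀ (Φ t ρ)) (LG₀ ρ) 0)
    (hxL : ∀ ρ, HasDerivAt (fun t => ‖(Φ t ρ).1‖) (Lx ρ) 0)
    (hLG₀pos : ∀ ρ, 0 ≤ LG₀ ρ)
    (hLG₀C : ∀ ρ, |p ρ| ≤ 2 * δ → LG₀ ρ ≤ C)
    (hLxC : ∀ ρ, |p ρ| ≤ 2 * δ → |Lx ρ| ≤ C₁)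
    (hG₀cont : Continuous G₀) (hpcont : Continuous p)
    (hcompact : IsCompact {ρ : EuclideanSpace ℝ (Fin n) × EuclideanSpace ℝ (Fin n) |
      ‖ρ.1‖ ≤ 2 * R ∧ |p ρ| ≤ 2 * δ})
    (hLG : ∀ ρ, HasDerivAt
      (fun t => χ (G₀ (Φ t ρ)) * ψ (p (Φ t ρ) / δ) * ψ (‖(Φ t ρ).1‖ / R)) (LG ρ) 0) :
    ∃ C₀ : ℝ, 0 < C₀ ∧
      (∀ ρ, -(C₀ * α * (1 + T / R)) ≤ LG ρ) ∧
      (∀ ρ, ‖ρ.1‖ < R → |G₀ ρ| < α * T → 0 ≤ LG ρ) ∧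
      (∀ ρ, ‖ρ.1‖ < R → |G₀ ρ| < α * T → |p ρ| ≤ δ → 1 ≤ LG₀ ρ → 1 ≤ LG ρ) ∧
      HasCompactSupport (fun ρ : EuclideanSpace ℝ (Fin n) × EuclideanSpace ℝ (Fin n) =>
        χ (G₀ ρ) * ψ (p ρ / δ) * ψ (‖ρ.1‖ / R)) :=
  stmt15_general χ χ' ψ ψ' G₀ p LG₀ Lx LG Φ T α δ R C C₁ Cψ hT hα hδ hR hC hC₁ hCψ hχd hχid hχb hχ'
    hψd hψ01 hψ1 hψ0 hψ'b hΦ0 hpinv hG₀L hxL hLG₀pos hLG₀C hLxC hcompact hLG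
end

section
/- Let (g_k)_{k=1,...,N} be C¹ maps between open subsets of ℝⁿ with uniformly bounded composed differentials: ‖∂(g_{k+1}∘⋯∘g_l)/∂x(x)‖ ≤ C_D for all 0 ≤ k < l ≤ N and all admissible x. Suppose f_k are C¹ functions with ‖f_k‖_{C⁰} ≤ D_k, ‖f_k‖_{C¹} ≤ C uniformly, 1/C_D ≤ D_k ≤ C_D, and a sequence of C¹ functions satisfies a_N(x) = f_N(x)·a_{N-1}(g_N(x)) with a_0 = a. Then, with J_N = D_1⋯D_N, one has ‖a_N‖_{C⁰} ≤ J_N‖a‖_{C⁰} and ‖∂a_N‖_{C⁰} ≤ C'·J_N·(N+1)·‖a‖_{C¹}, with C' depending only on C, C_D. -/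
/-!
Pull everything back to the last level: for fixed `N`, `b n := a_n ∘ G n N` satisfies
`b (n+1) = (f (n+1) ∘ G (n+1) N) · b n` and `b N = a_N`. The Leibniz rule and the bound on the
composed Jacobians give `‖∂b (n+1)‖ ≤ D (n+1) ‖∂b n‖ + J n ‖a‖_{C⁰} C C_D`, and
`J n ≤ C_D J (n+1)` since `D ≥ 1/C_D`. So each level adds at most `C C_D² ‖a‖_{C⁰}` to
`‖∂b n‖ / J n`, which starts at `C_D ‖∂a‖_{C⁰}`; hence
`‖∂a_N‖ ≤ J N (C_D ‖∂a‖_{C⁰} + N C C_D² ‖a‖_{C⁰})`.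
-/

open Finset

theorem le_prod_mul_add_of_le_mul_add {D y : ℕ → ℝ} {c b : ℝ} {N : ℕ}
    (hD : ∀ n < N, 0 ≤ D (n + 1)) (h0 : y 0 ≤ c)
    (hstep : ∀ n < N, y (n + 1) ≤ D (n + 1) * y n + (∏ i ∈ Icc 1 (n + 1), D i) * b) :
    y N ≤ (∏ i ∈ Icc 1 N, D i) * (c + N * b) := by
  induction N with
  | zero => simpa using h0
  | succ n ih =>
    have hy := ih (fun m hm => hD m (by omega)) (fun m hm => hstep m (by omega))
    have hn := hstep n n.lt_succ_self
    rw [prod_Icc_succ_top (by omega)] at hn ⊢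
    calc y (n + 1)
        ≤ D (n + 1) * ((∏ i ∈ Icc 1 n, D i) * (c + n * b))
          + (∏ i ∈ Icc 1 n, D i) * D (n + 1) * b := by
          grw [← hy]; exacts [hn, hD n n.lt_succ_self]
      _ = (∏ i ∈ Icc 1 n, D i) * D (n + 1) * (c + (n + 1 : ℕ) * b) := by push_cast; ring

section Calculus

variable {𝕜 E F : Type*} [NontriviallyNormedField 𝕜] [NormedAddCommGroup E] [NormedSpace 𝕜 E]
  [NormedAddCommGroup F] [NormedSpace 𝕜 F]

theorem norm_fderiv_mul_le {u v : E → 𝕜} {x : E} (hu : DifferentiableAt 𝕜 u x)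
    (hv : DifferentiableAt 𝕜 v x) :
    ‖fderiv 𝕜 (fun y => u y * v y) x‖ ≤ ‖u x‖ * ‖fderiv 𝕜 v x‖ + ‖v x‖ * ‖fderiv 𝕜 u x‖ := by
  rw [fderiv_fun_mul hu hv]
  exact (norm_add_le _ _).trans_eq (by rw [norm_smul, norm_smul])

theorem norm_fderiv_comp_le {u : F → 𝕜} {φ : E → F} {x : E} (hu : DifferentiableAt 𝕜 u (φ x))
    (hφ : DifferentiableAt 𝕜 φ x) :
    ‖fderiv 𝕜 (u ∘ φ) x‖ ≤ ‖fderiv 𝕜 u (φ x)‖ * ‖fderiv 𝕜 φ x‖ := by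
  rw [fderiv_comp x hu hφ]
  exact ContinuousLinearMap.opNorm_comp_le _ _

theorem differentiable_of_comp_rec {g : ℕ → E → E} {G : ℕ → ℕ → E → E}
    (hg : ∀ k, Differentiable 𝕜 (g (k + 1))) (hGid : ∀ l, G l l = id)
    (hGrec : ∀ k l, k < l → G k l = g (k + 1) ∘ G (k + 1) l) {k l : ℕ} (hkl : k ≤ l) :
    Differentiable 𝕜 (G k l) := by
  induction hkl using Nat.decreasingInduction with
  | self => rw [hGid]; exact differentiable_id
  | of_succ k hk ih => rw [hGrec k l hk]; exact (hg k).comp ih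

end Calculus

section MulCompRec

variable {X : Type*} {f : ℕ → X → ℝ} {g : ℕ → X → X} {aa : ℕ → X → ℝ} {D : ℕ → ℝ}

theorem abs_le_prod_mul_of_mul_comp_rec {A₀ : ℝ} (hf : ∀ n x, |f (n + 1) x| ≤ D (n + 1))
    (ha : ∀ x, |aa 0 x| ≤ A₀) (hrec : ∀ n x, aa (n + 1) x = f (n + 1) x * aa n (g (n + 1) x))
    (N : ℕ) (x : X) : |aa N x| ≤ (∏ i ∈ Icc 1 N, D i) * A₀ := by
  induction N generalizing x with
  | zero => simpa using ha x
  | succ n ih =>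
    rw [hrec, abs_mul, prod_Icc_succ_top (by omega)]
    calc |f (n + 1) x| * |aa n (g (n + 1) x)|
        ≤ D (n + 1) * ((∏ i ∈ Icc 1 n, D i) * A₀) :=
          mul_le_mul (hf n x) (ih _) (abs_nonneg _) ((abs_nonneg _).trans (hf n x))
      _ = (∏ i ∈ Icc 1 n, D i) * D (n + 1) * A₀ := by ring

end MulCompRec

section MulCompRecDeriv

variable {E : Type*} [NormedAddCommGroup E] [NormedSpace ℝ E]
  {f : ℕ → E → ℝ} {g : ℕ → E → E} {aa : ℕ → E → ℝ} {G : ℕ → ℕ → E → E} {D : ℕ → ℝ}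

theorem differentiable_of_mul_comp_rec (hf : ∀ n, Differentiable ℝ (f (n + 1)))
    (hg : ∀ n, Differentiable ℝ (g (n + 1))) (ha : Differentiable ℝ (aa 0))
    (hrec : ∀ n x, aa (n + 1) x = f (n + 1) x * aa n (g (n + 1) x)) (N : ℕ) :
    Differentiable ℝ (aa N) := by
  induction N with
  | zero => exact ha
  | succ n ih =>
    rw [show aa (n + 1) = fun x => f (n + 1) x * aa n (g (n + 1) x) from funext (hrec n)]
    exact (hf n).mul (ih.comp (hg n))

theorem prod_Icc_le_mul_prod_Icc_succ {C_D : ℝ} (hCD : 0 < C_D) (hD : ∀ k, 1 ≤ k → C_D⁻¹ ≤ D k)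
    (n : ℕ) : (∏ i ∈ Icc 1 n, D i) ≤ C_D * ∏ i ∈ Icc 1 (n + 1), D i := by
  rw [prod_Icc_succ_top (by omega), mul_left_comm]
  refine le_mul_of_one_le_right (prod_nonneg fun i hi => ?_) ?_
  · exact (inv_pos.2 hCD).le.trans (hD i (mem_Icc.1 hi).1)
  · exact (inv_le_iff_one_le_mul₀' hCD).1 (hD _ n.succ_pos)

theorem norm_fderiv_mul_comp_rec_succ_le {C C_D A₀ : ℝ}
    (hf0 : ∀ n x, |f (n + 1) x| ≤ D (n + 1)) (hf1 : ∀ n x, ‖fderiv ℝ (f (n + 1)) x‖ ≤ C)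
    (hfdiff : ∀ n, Differentiable ℝ (f (n + 1))) (hgdiff : ∀ n, Differentiable ℝ (g (n + 1)))
    (hGid : ∀ l, G l l = id) (hGrec : ∀ k l, k < l → G k l = g (k + 1) ∘ G (k + 1) l)
    (hG : ∀ k l x, k ≤ l → ‖fderiv ℝ (G k l) x‖ ≤ C_D)
    (ha0 : ∀ x, |aa 0 x| ≤ A₀) (hadiff : Differentiable ℝ (aa 0))
    (hrec : ∀ n x, aa (n + 1) x = f (n + 1) x * aa n (g (n + 1) x)) {n M : ℕ} (hn : n < M)
    (x : E) :
    ‖fderiv ℝ (aa (n + 1) ∘ G (n + 1) M) x‖ ≤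
      D (n + 1) * ‖fderiv ℝ (aa n ∘ G n M) x‖ + (∏ i ∈ Icc 1 n, D i) * A₀ * (C * C_D) := by
  have hGdiff {k} (hk : k ≤ M) := differentiable_of_comp_rec hgdiff hGid hGrec hk
  have hpull : aa (n + 1) ∘ G (n + 1) M =
      fun y => (f (n + 1) ∘ G (n + 1) M) y * (aa n ∘ G n M) y := by
    funext y
    simp only [Function.comp_apply, hrec, hGrec n M hn]
  have hfx : ‖(f (n + 1) ∘ G (n + 1) M) x‖ ≤ D (n + 1) :=
    (Real.norm_eq_abs _).trans_le (hf0 n _)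
  have hbx : ‖(aa n ∘ G n M) x‖ ≤ (∏ i ∈ Icc 1 n, D i) * A₀ :=
    (Real.norm_eq_abs _).trans_le (abs_le_prod_mul_of_mul_comp_rec hf0 ha0 hrec n _)
  have hfG : ‖fderiv ℝ (f (n + 1) ∘ G (n + 1) M) x‖ ≤ C * C_D := by
    grw [norm_fderiv_comp_le (hfdiff n _) (hGdiff (k := n + 1) hn x), hf1, hG _ _ _ hn]
    exact (norm_nonneg _).trans (hf1 n x)
  rw [hpull]
  calc _ ≤ _ := norm_fderiv_mul_le ((hfdiff n).comp (hGdiff (k := n + 1) hn) x)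
        ((differentiable_of_mul_comp_rec hfdiff hgdiff hadiff hrec n).comp (hGdiff hn.le) x)
    _ ≤ _ := add_le_add (mul_le_mul_of_nonneg_right hfx (norm_nonneg _))
        (mul_le_mul hbx hfG (norm_nonneg _) ((norm_nonneg _).trans hbx))

theorem norm_fderiv_le_prod_mul_of_mul_comp_rec {C C_D A₀ A₁ : ℝ} (hCD : 0 < C_D)
    (hD : ∀ k, 1 ≤ k → C_D⁻¹ ≤ D k)
    (hf0 : ∀ n x, |f (n + 1) x| ≤ D (n + 1)) (hf1 : ∀ n x, ‖fderiv ℝ (f (n + 1)) x‖ ≤ C)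
    (hfdiff : ∀ n, Differentiable ℝ (f (n + 1))) (hgdiff : ∀ n, Differentiable ℝ (g (n + 1)))
    (hGid : ∀ l, G l l = id) (hGrec : ∀ k l, k < l → G k l = g (k + 1) ∘ G (k + 1) l)
    (hG : ∀ k l x, k ≤ l → ‖fderiv ℝ (G k l) x‖ ≤ C_D)
    (ha0 : ∀ x, |aa 0 x| ≤ A₀) (ha1 : ∀ x, ‖fderiv ℝ (aa 0) x‖ ≤ A₁)
    (hadiff : Differentiable ℝ (aa 0))
    (hrec : ∀ n x, aa (n + 1) x = f (n + 1) x * aa n (g (n + 1) x)) (N : ℕ) (x : E) :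
    ‖fderiv ℝ (aa N) x‖ ≤ (∏ i ∈ Icc 1 N, D i) * (C_D * A₁ + N * (C * C_D ^ 2 * A₀)) := by
  have hC : 0 ≤ C := (norm_nonneg _).trans (hf1 0 x)
  have hA₀ : 0 ≤ A₀ := (abs_nonneg _).trans (ha0 x)
  rw [show aa N = aa N ∘ G N N by rw [hGid, Function.comp_id]]
  refine le_prod_mul_add_of_le_mul_add (y := fun n => ‖fderiv ℝ (aa n ∘ G n N) x‖)
    (fun n _ => (inv_pos.2 hCD).le.trans (hD _ n.succ_pos)) ?_ fun n hn => ?_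
  · calc ‖fderiv ℝ (aa 0 ∘ G 0 N) x‖ ≤ A₁ * C_D := by
          grw [norm_fderiv_comp_le (hadiff _)
            (differentiable_of_comp_rec hgdiff hGid hGrec N.zero_le x), ha1, hG 0 N x N.zero_le]
          exact (norm_nonneg _).trans (ha1 x)
      _ = C_D * A₁ := mul_comm _ _
  · grw [norm_fderiv_mul_comp_rec_succ_le hf0 hf1 hfdiff hgdiff hGid hGrec hG ha0 hadiff hrec hn,
      prod_Icc_le_mul_prod_Icc_succ hCD hD n]
    exact le_of_eq (by ring)

end MulCompRecDeriv

theorem stmt16_general {d : ℕ} (C C_D A₀ A₁ : ℝ) (hCD : 1 ≤ C_D)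
    (g : ℕ → EuclideanSpace ℝ (Fin d) → EuclideanSpace ℝ (Fin d))
    (f : ℕ → EuclideanSpace ℝ (Fin d) → ℝ)
    (a : EuclideanSpace ℝ (Fin d) → ℝ)
    (D : ℕ → ℝ)
    (G : ℕ → ℕ → EuclideanSpace ℝ (Fin d) → EuclideanSpace ℝ (Fin d))
    (hgdiff : ∀ k, Differentiable ℝ (g k))
    (hfdiff : ∀ k, Differentiable ℝ (f k))
    (hadiff : Differentiable ℝ a)
    (hD : ∀ k, 1 ≤ k → 1 / C_D ≤ D k ∧ D k ≤ C_D)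
    (hf0 : ∀ k x, 1 ≤ k → |f k x| ≤ D k)
    (hf1 : ∀ k x, 1 ≤ k → ‖fderiv ℝ (f k) x‖ ≤ C)
    (hGid : ∀ l, G l l = id)
    (hGrec : ∀ k l, k < l → G k l = g (k + 1) ∘ G (k + 1) l)
    (hGlip : ∀ k l x, k ≤ l → ‖fderiv ℝ (G k l) x‖ ≤ C_D)
    (ha0 : ∀ x, |a x| ≤ A₀)
    (ha1 : ∀ x, ‖fderiv ℝ a x‖ ≤ A₁) (hA : A₀ ≤ A₁)
    (aa : ℕ → EuclideanSpace ℝ (Fin d) → ℝ)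
    (haa0 : aa 0 = a)
    (haarec : ∀ N, 1 ≤ N → ∀ x, aa N x = f N x * aa (N - 1) (g N x)) :
    (∀ N x, |aa N x| ≤ (∏ i ∈ Finset.Icc 1 N, D i) * A₀) ∧
    ∃ C' : ℝ, 0 < C' ∧ ∀ N x,
      ‖fderiv ℝ (aa N) x‖ ≤ C' * (∏ i ∈ Finset.Icc 1 N, D i) * ((N : ℝ) + 1) * A₁ := by
  have hrec : ∀ n x, aa (n + 1) x = f (n + 1) x * aa n (g (n + 1) x) :=
    fun n => haarec (n + 1) n.succ_pos
  have hf0' : ∀ n x, |f (n + 1) x| ≤ D (n + 1) := fun n x => hf0 _ x n.succ_pos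
  have hCD0 : 0 < C_D := one_pos.trans_le hCD
  have hC : 0 ≤ C := (norm_nonneg _).trans (hf1 1 0 le_rfl)
  have hA₁ : 0 ≤ A₁ := (norm_nonneg _).trans (ha1 0)
  subst haa0
  refine ⟨abs_le_prod_mul_of_mul_comp_rec hf0' ha0 hrec, C * C_D ^ 2 + C_D, by positivity,
    fun N x => ?_⟩
  have hJ : 0 ≤ ∏ i ∈ Icc 1 N, D i := prod_nonneg fun i hi =>
    (one_div_pos.2 hCD0).le.trans (hD i (mem_Icc.1 hi).1).1
  grw [norm_fderiv_le_prod_mul_of_mul_comp_rec hCD0 (fun k hk => by simpa using (hD k hk).1) hf0'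
    (fun n x => hf1 _ x n.succ_pos) (fun n => hfdiff _) (fun n => hgdiff _) hGid hGrec hGlip ha0 ha1 hadiff hrec N x, hA]
  calc (∏ i ∈ Icc 1 N, D i) * (C_D * A₁ + N * (C * C_D ^ 2 * A₁))
      ≤ (∏ i ∈ Icc 1 N, D i) * ((C * C_D ^ 2 + C_D) * (N + 1) * A₁) := by
        gcongr
        nlinarith [mul_nonneg (mul_nonneg hC (sq_nonneg C_D)) hA₁, mul_nonneg hCD0.le hA₁,
          mul_nonneg (mul_nonneg hCD0.le hA₁) (Nat.cast_nonneg (α := ℝ) N)]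
    _ = _ := by ring

/-- C⁰ and C¹ estimates for iterated symbols (Proposition 5.3): if
`a_N(x) = f_N(x)·a_{N-1}(g_N(x))` with `|f_k| ≤ D_k`, `‖∂f_k‖ ≤ C`, and all composed
Jacobians `∂(g_{k+1}∘⋯∘g_l)` bounded by `C_D`, then `|a_N| ≤ J_N‖a‖_{C⁰}` and
`‖∂a_N‖ ≤ C'·J_N·(N+1)·‖a‖_{C¹}` with `C'` depending only on `C, C_D`. -/
theorem stmt16 {d : ℕ} (C C_D A₀ A₁ : ℝ) (hC : 0 < C) (hCD : 1 ≤ C_D)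
    (g : ℕ → EuclideanSpace ℝ (Fin d) → EuclideanSpace ℝ (Fin d))
    (f : ℕ → EuclideanSpace ℝ (Fin d) → ℝ)
    (a : EuclideanSpace ℝ (Fin d) → ℝ)
    (D : ℕ → ℝ)
    (G : ℕ → ℕ → EuclideanSpace ℝ (Fin d) → EuclideanSpace ℝ (Fin d))
    (hgdiff : ∀ k, Differentiable ℝ (g k))
    (hfdiff : ∀ k, Differentiable ℝ (f k))
    (hadiff : Differentiable ℝ a)
    (hD : ∀ k, 1 ≤ k → 1 / C_D ≤ D k ∧ D k ≤ C_D)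
    (hf0 : ∀ k x, 1 ≤ k → |f k x| ≤ D k)
    (hf1 : ∀ k x, 1 ≤ k → ‖fderiv ℝ (f k) x‖ ≤ C)
    (hGid : ∀ l, G l l = id)
    (hGrec : ∀ k l, k < l → G k l = g (k + 1) ∘ G (k + 1) l)
    (hGlip : ∀ k l x, k ≤ l → ‖fderiv ℝ (G k l) x‖ ≤ C_D)
    (ha0 : ∀ x, |a x| ≤ A₀)
    (ha1 : ∀ x, ‖fderiv ℝ a x‖ ≤ A₁) (hA : A₀ ≤ A₁)
    (aa : ℕ → EuclideanSpace ℝ (Fin d) → ℝ)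
    (haa0 : aa 0 = a)
    (haarec : ∀ N, 1 ≤ N → ∀ x, aa N x = f N x * aa (N - 1) (g N x)) :
    (∀ N x, |aa N x| ≤ (∏ i ∈ Finset.Icc 1 N, D i) * A₀) ∧
    ∃ C' : ℝ, 0 < C' ∧ ∀ N x,
      ‖fderiv ℝ (aa N) x‖ ≤ C' * (∏ i ∈ Finset.Icc 1 N, D i) * ((N : ℝ) + 1) * A₁ :=
  stmt16_general C C_D A₀ A₁ hCD g f a D G hgdiff hfdiff hadiff hD hf0 hf1 hGid hGrec hGlip ha0 ha1
    hA aa haa0 haarec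
end

section
/- (Inclination lemma, one step, graph form.) Let κ(u,s) = (Au + α(u,s), ᵀA^{-1}s + β(u,s)) be a map on a product of ε-balls in ℝ^{n-1}×ℝ^{n-1}, where A is invertible with ‖A^{-1}‖ ≤ ν < 1, ‖ᵀA^{-1}‖ ≤ ν, α(0,0) = β(0,0) = 0, and ‖α‖_{C¹}, ‖β‖_{C¹} ≤ Cε^γ. Fix γ₁ > 0. If ε is small enough (depending on ν, C, γ, γ₁), then for any C¹ function f with ‖df‖ ≤ γ₁ on the ε-ball, the image κ({(u, f(u))}) is again a graph {(u', f'(u'))} over the ε-ball with ‖df'‖ ≤ ν₂γ₁ where ν₂ = ν + Cε^γ < 1; moreover the induced map u ↦ u' = Au + α(u,f(u)) is a diffeomorphism onto its image whose inverse has differential norm at most ν₁ = ν + C'ε^γ(1+γ₁) < 1. -/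
/-!
Along the graph of `f` the horizontal map is `u ↦ A u + φ u` with `φ u = α (u, f u)`, and `φ` is
`q`-Lipschitz with `q = C ε^γ (1 + γ₁)`. As `‖A⁻¹‖ ≤ ν`, the map `A + φ` is then injective on the
ball, covers the ball (the contraction argument behind the inverse function theorem, started
from `φ 0 = 0`), and has a `ν / (1 - ν q)`-Lipschitz inverse `g`, differentiable because
`A + dφ` stays invertible. The image graph is `f' = (B ∘ f + β ∘ (id, f)) ∘ g`, whose Lipschitz
constant `(ν γ₁ + q) ν / (1 - ν q)` tends to `ν² γ₁ < ν γ₁` as `ε → 0`.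
-/

open Metric Set Filter Topology NNReal

namespace ContinuousLinearMap

variable {𝕜 E F : Type*} [NontriviallyNormedField 𝕜] [NormedAddCommGroup E] [NormedSpace 𝕜 E]
  [NormedAddCommGroup F] [NormedSpace 𝕜 F]

theorem norm_id_prod_le (L : E →L[𝕜] F) : ‖(ContinuousLinearMap.id 𝕜 E).prod L‖ ≤ max 1 ‖L‖ := by
  rw [opNorm_prod, Prod.norm_def]
  exact max_le_max norm_id_le le_rfl

theorem exists_equiv_coe_eq_add [CompleteSpace E] {A Ainv : E →L[𝕜] E}
    (hleft : ∀ u, Ainv (A u) = u) (hright : ∀ u, A (Ainv u) = u) {N : E →L[𝕜] E}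
    (hN : ‖Ainv‖ * ‖N‖ < 1) : ∃ e : E ≃L[𝕜] E, (e : E →L[𝕜] E) = A + N := by
  -- `A + N = A (1 + A⁻¹ N)`, and `1 + A⁻¹ N` is a unit by the Neumann series.
  let uA : (E →L[𝕜] E)ˣ := ⟨A, Ainv, ext hright, ext hleft⟩
  have hsmall : ‖-(Ainv * N)‖ < 1 := by rw [norm_neg]; exact (norm_mul_le _ _).trans_lt hN
  refine ⟨ContinuousLinearEquiv.unitsEquiv 𝕜 E (uA * Units.oneSub _ hsmall), ?_⟩
  ext x
  simp [uA, hright]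

end ContinuousLinearMap

theorem Convex.lipschitzOnWith_of_norm_fderiv_le {E F : Type*} [NormedAddCommGroup E]
    [NormedSpace ℝ E] [NormedAddCommGroup F] [NormedSpace ℝ F] {f : E → F} {s : Set E} {C : ℝ}
    (hs : Convex ℝ s) (hf : ∀ x ∈ s, DifferentiableAt ℝ f x)
    (bound : ∀ x ∈ s, ‖fderiv ℝ f x‖ ≤ C) : LipschitzOnWith C.toNNReal f s :=
  LipschitzOnWith.of_dist_le' fun x hx y hy => by
    simpa only [dist_eq_norm] using hs.norm_image_sub_le_of_norm_fderiv_le hf bound hy hx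

section Graph

variable {E F G : Type*} [NormedAddCommGroup E] [NormedSpace ℝ E] [NormedAddCommGroup F]
  [NormedSpace ℝ F] [NormedAddCommGroup G] [NormedSpace ℝ G] {α : E × F → G} {f : E → F}

theorem hasFDerivAt_comp_graph {x : E} (hα : DifferentiableAt ℝ α (x, f x))
    (hf : DifferentiableAt ℝ f x) :
    HasFDerivAt (fun u => α (u, f u))
      ((fderiv ℝ α (x, f x)).comp ((ContinuousLinearMap.id ℝ E).prod (fderiv ℝ f x))) x :=
  hα.hasFDerivAt.comp x ((hasFDerivAt_id x).prodMk hf.hasFDerivAt)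

theorem norm_fderiv_comp_graph_le {x : E} (hα : DifferentiableAt ℝ α (x, f x))
    (hf : DifferentiableAt ℝ f x) :
    ‖fderiv ℝ (fun u => α (u, f u)) x‖ ≤ ‖fderiv ℝ α (x, f x)‖ * max 1 ‖fderiv ℝ f x‖ := by
  rw [(hasFDerivAt_comp_graph hα hf).fderiv]
  exact (ContinuousLinearMap.opNorm_comp_le _ _).trans
    (by gcongr; exact ContinuousLinearMap.norm_id_prod_le _)

theorem lipschitzOnWith_comp_graph {s : Set E} {d γ₁ : ℝ} (hs : Convex ℝ s)
    (hα : Differentiable ℝ α) (hf : Differentiable ℝ f) (hαd : ∀ z, ‖fderiv ℝ α z‖ ≤ d)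
    (hfd : ∀ x ∈ s, ‖fderiv ℝ f x‖ ≤ γ₁) :
    LipschitzOnWith (d * max 1 γ₁).toNNReal (fun u => α (u, f u)) s := by
  have hd : 0 ≤ d := (norm_nonneg _).trans (hαd 0)
  refine hs.lipschitzOnWith_of_norm_fderiv_le
    (fun x _ => (hα _).comp x (differentiableAt_id.prodMk (hf x))) fun x hx => ?_
  exact (norm_fderiv_comp_graph_le (hα _) (hf x)).trans (by gcongr; exacts [hαd _, hfd x hx])

end Graph

section Perturbation

variable {E : Type*} [NormedAddCommGroup E] [NormedSpace ℝ E] {A Ainv : E →L[ℝ] E} {φ : E → E}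
  {s : Set E} {ν : ℝ} {c : ℝ≥0}

theorem mul_norm_sub_le_of_lipschitzOnWith (hleft : ∀ u, Ainv (A u) = u) (hAinv : ‖Ainv‖ ≤ ν)
    (hφ : LipschitzOnWith c φ s) {u v : E} (hu : u ∈ s) (hv : v ∈ s) :
    (1 - ν * c) * ‖u - v‖ ≤ ν * ‖(A u + φ u) - (A v + φ v)‖ := by
  have hν : 0 ≤ ν := (norm_nonneg _).trans hAinv
  have hsub : u - v = Ainv ((A u + φ u) - (A v + φ v) - (φ u - φ v)) := by
    rw [← hleft (u - v), map_sub]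
    congr 1
    abel
  have := calc
    ‖u - v‖ ≤ ‖Ainv‖ * ‖(A u + φ u) - (A v + φ v) - (φ u - φ v)‖ := hsub ▸ Ainv.le_opNorm _
    _ ≤ ν * (‖(A u + φ u) - (A v + φ v)‖ + c * ‖u - v‖) :=
      mul_le_mul hAinv ((norm_sub_le _ _).trans (add_le_add_right (hφ.norm_sub_le hu hv) _))
        (norm_nonneg _) hν
  linarith

theorem injOn_add_of_lipschitzOnWith (hleft : ∀ u, Ainv (A u) = u) (hAinv : ‖Ainv‖ ≤ ν)
    (hφ : LipschitzOnWith c φ s) (hνc : ν * c < 1) : InjOn (fun u => A u + φ u) s := by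
  intro u hu v hv huv
  have := mul_norm_sub_le_of_lipschitzOnWith hleft hAinv hφ hu hv
  rw [show A u + φ u - (A v + φ v) = 0 from sub_eq_zero.2 huv, norm_zero, mul_zero] at this
  exact sub_eq_zero.1 (norm_le_zero_iff.1 (nonpos_of_mul_nonpos_right this (by linarith)))

theorem lipschitzOnWith_of_rightInvOn_add (hleft : ∀ u, Ainv (A u) = u) (hAinv : ‖Ainv‖ ≤ ν)
    (hφ : LipschitzOnWith c φ s) (hνc : ν * c < 1) {K : ℝ} (hK : ν ≤ K * (1 - ν * c))
    {g : E → E} {t : Set E} (hg : MapsTo g t s) (hginv : RightInvOn g (fun u => A u + φ u) t) :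
    LipschitzOnWith K.toNNReal g t := by
  refine LipschitzOnWith.of_dist_le' fun x hx y hy => ?_
  have := mul_norm_sub_le_of_lipschitzOnWith hleft hAinv hφ (hg hx) (hg hy)
  rw [show A (g x) + φ (g x) = x from hginv hx, show A (g y) + φ (g y) = y from hginv hy] at this
  rw [dist_eq_norm, dist_eq_norm]
  refine le_of_mul_le_mul_left ?_ (sub_pos.2 hνc)
  nlinarith [norm_nonneg (x - y)]

theorem surjOn_ball_add_of_lipschitzOnWith [CompleteSpace E] (hright : ∀ u, A (Ainv u) = u)
    (hAinv : ‖Ainv‖ ≤ ν) (hν : 0 < ν) {ε : ℝ} (hφ : LipschitzOnWith c φ (ball 0 ε))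
    (hφ0 : φ 0 = 0) (hνc : ν * (1 + c) ≤ 1) :
    SurjOn (fun u => A u + φ u) (ball 0 ε) (ball 0 ε) := by
  intro w hw
  obtain ⟨r, hwr, hrε⟩ := exists_between (mem_ball_zero_iff.1 hw)
  let Ainv' : A.NonlinearRightInverse :=
    ⟨Ainv, ⟨ν, hν.le⟩, fun y => (Ainv.le_opNorm y).trans (by gcongr; exact hAinv), hright⟩
  have happrox : ApproximatesLinearOn (fun u => A u + φ u) A (closedBall 0 r) c :=
    fun x hx y hy => by
      simpa [map_sub, add_sub_add_comm] using
        hφ.norm_sub_le (closedBall_subset_ball hrε hx) (closedBall_subset_ball hrε hy)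
  have hradius : 1 + c ≤ ν⁻¹ := by rw [← one_div, le_div_iff₀' hν]; exact hνc
  have hw' : w ∈ closedBall (A 0 + φ 0) ((ν⁻¹ - c) * r) := by
    rw [hφ0, map_zero, add_zero, mem_closedBall_zero_iff]
    show ‖w‖ ≤ (ν⁻¹ - c) * r
    nlinarith [norm_nonneg w]
  -- The contraction argument reaches the radius `(ν⁻¹ - c) r ≥ r`.
  obtain ⟨u, hu, huw⟩ := happrox.surjOn_closedBall_of_nonlinearRightInverse Ainv'
    ((norm_nonneg w).trans hwr.le) subset_rfl hw'
  exact ⟨u, closedBall_subset_ball hrε hu, huw⟩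

theorem differentiableAt_of_eventually_rightInverse_add [CompleteSpace E] {N : E →L[ℝ] E}
    {g : E → E} {w : E} (hleft : ∀ u, Ainv (A u) = u) (hright : ∀ u, A (Ainv u) = u)
    (hφ : HasFDerivAt φ N (g w)) (hN : ‖Ainv‖ * ‖N‖ < 1) (hg : ContinuousAt g w)
    (hginv : ∀ᶠ y in 𝓝 w, A (g y) + φ (g y) = y) : DifferentiableAt ℝ g w := by
  obtain ⟨e, he⟩ := ContinuousLinearMap.exists_equiv_coe_eq_add hleft hright hN
  have hΦ : HasFDerivAt (fun u => A u + φ u) (e : E →L[ℝ] E) (g w) := he ▸ A.hasFDerivAt.add hφ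
  exact (hΦ.of_local_left_inverse hg hginv).differentiableAt

theorem exists_rightInvOn_ball_add [CompleteSpace E] (hleft : ∀ u, Ainv (A u) = u)
    (hright : ∀ u, A (Ainv u) = u) (hAinv : ‖Ainv‖ ≤ ν) (hν : 0 < ν) {ε K : ℝ}
    (hφ : Differentiable ℝ φ) (hφ_lip : LipschitzOnWith c φ (ball 0 ε)) (hφ0 : φ 0 = 0)
    (hνc : ν * (1 + c) ≤ 1) (hK : ν ≤ K * (1 - ν * c)) :
    ∃ g : E → E, MapsTo g (ball 0 ε) (ball 0 ε) ∧
      RightInvOn g (fun u => A u + φ u) (ball 0 ε) ∧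
      LipschitzOnWith K.toNNReal g (ball 0 ε) ∧ ∀ w ∈ ball 0 ε, DifferentiableAt ℝ g w := by
  have hνc' : ν * c < 1 := by nlinarith
  have hsurj := surjOn_ball_add_of_lipschitzOnWith hright hAinv hν hφ_lip hφ0 hνc
  have hg_maps := hsurj.mapsTo_invFunOn
  have hg_inv := hsurj.rightInvOn_invFunOn
  have hg_lip := lipschitzOnWith_of_rightInvOn_add hleft hAinv hφ_lip hνc' hK hg_maps hg_inv
  refine ⟨_, hg_maps, hg_inv, hg_lip, fun w hw => ?_⟩
  have hball : ball (0 : E) ε ∈ 𝓝 w := isOpen_ball.mem_nhds hw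
  have hφ_deriv := norm_fderiv_le_of_lipschitzOn ℝ (isOpen_ball.mem_nhds (hg_maps hw)) hφ_lip
  exact differentiableAt_of_eventually_rightInverse_add hleft hright (hφ _).hasFDerivAt
    ((mul_le_mul hAinv hφ_deriv (norm_nonneg _) hν.le).trans_lt hνc')
    ((hg_lip.continuousOn).continuousAt hball) (eventually_of_mem hball hg_inv)

end Perturbation

section GraphTransform

variable {E F : Type*} [NormedAddCommGroup E] [NormedSpace ℝ E] [CompleteSpace E]
  [NormedAddCommGroup F] [NormedSpace ℝ F]

theorem graph_transform_of_hyperbolic {A Ainv : E →L[ℝ] E} {B : F →L[ℝ] F} {α : E × F → E}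
    {β : E × F → F} {f : E → F} {ν ν₁ ν₂ d q γ₁ ε : ℝ}
    (hleft : ∀ u, Ainv (A u) = u) (hright : ∀ u, A (Ainv u) = u)
    (hAinv : ‖Ainv‖ ≤ ν) (hB : ‖B‖ ≤ ν) (hα : Differentiable ℝ α) (hβ : Differentiable ℝ β)
    (hα0 : α (0, 0) = 0) (hαd : ∀ z, ‖fderiv ℝ α z‖ ≤ d) (hβd : ∀ z, ‖fderiv ℝ β z‖ ≤ d)
    (hf : Differentiable ℝ f) (hf0 : f 0 = 0) (hfd : ∀ u ∈ ball 0 ε, ‖fderiv ℝ f u‖ ≤ γ₁)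
    (hν : 0 < ν) (hγ₁ : 0 ≤ γ₁) (hdq : d * max 1 γ₁ ≤ q) (hq : ν * (1 + q) ≤ 1)
    (hν₁ : ν ≤ ν₁ * (1 - ν * q)) (hν₂ : (ν * γ₁ + q) * ν₁ ≤ ν₂ * γ₁) :
    InjOn (fun u => A u + α (u, f u)) (ball 0 ε) ∧
    ∃ (g : E → E) (f' : E → F), ∀ u' ∈ ball (0 : E) ε,
      g u' ∈ ball 0 ε ∧ A (g u') + α (g u', f (g u')) = u' ∧
      DifferentiableAt ℝ g u' ∧ ‖fderiv ℝ g u'‖ ≤ ν₁ ∧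
      f' u' = B (f (g u')) + β (g u', f (g u')) ∧
      DifferentiableAt ℝ f' u' ∧ ‖fderiv ℝ f' u'‖ ≤ ν₂ * γ₁ := by
  have hd : 0 ≤ d := (norm_nonneg _).trans (hαd 0)
  have hq0 : 0 ≤ q := (mul_nonneg hd (zero_le_one.trans (le_max_left _ _))).trans hdq
  have hcq : (q.toNNReal : ℝ) = q := Real.coe_toNNReal q hq0
  have hν₁0 : 0 ≤ ν₁ := by nlinarith
  have hφ_lip : LipschitzOnWith q.toNNReal (fun u => α (u, f u)) (ball 0 ε) :=
    (lipschitzOnWith_comp_graph (convex_ball 0 ε) hα hf hαd hfd).weaken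
      (Real.toNNReal_le_toNNReal hdq)
  obtain ⟨g, hg_maps, hg_inv, hg_lip, hg_diff⟩ := exists_rightInvOn_ball_add hleft hright hAinv
    hν (by fun_prop) hφ_lip (by simp [hf0, hα0]) (by rwa [hcq]) (by rwa [hcq])
  have hψ_lip : LipschitzOnWith (‖B‖₊ * γ₁.toNNReal + q.toNNReal)
      (fun u => B (f u) + β (u, f u)) (ball 0 ε) :=
    (B.lipschitz.comp_lipschitzOnWith
      ((convex_ball 0 ε).lipschitzOnWith_of_norm_fderiv_le (fun x _ => hf x) hfd)).add
      ((lipschitzOnWith_comp_graph (convex_ball 0 ε) hβ hf hβd hfd).weaken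
        (Real.toNNReal_le_toNNReal hdq))
  refine ⟨injOn_add_of_lipschitzOnWith hleft hAinv hφ_lip (by rw [hcq]; nlinarith), g,
    fun w => B (f (g w)) + β (g w, f (g w)), fun u' hu' => ?_⟩
  have hball : ball (0 : E) ε ∈ 𝓝 u' := isOpen_ball.mem_nhds hu'
  refine ⟨hg_maps hu', hg_inv hu', hg_diff u' hu', ?_, rfl, by fun_prop, ?_⟩
  · exact (norm_fderiv_le_of_lipschitzOn ℝ hball hg_lip).trans (Real.coe_toNNReal _ hν₁0).le
  · refine (norm_fderiv_le_of_lipschitzOn ℝ hball (hψ_lip.comp hg_lip hg_maps)).trans ?_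
    simp only [NNReal.coe_mul, NNReal.coe_add, coe_nnnorm, Real.coe_toNNReal _ hγ₁, hcq,
      Real.coe_toNNReal _ hν₁0]
    exact le_trans (by gcongr) hν₂

end GraphTransform

theorem eventually_small_hyperbolicity_constants {ν γ₁ : ℝ} (hν : 0 < ν) (hν1 : ν < 1)
    (hγ₁ : 0 < γ₁) :
    ∀ᶠ d in 𝓝 (0 : ℝ), ν + d < 1 ∧ ν + 2 * d * (1 + γ₁) < 1 ∧
      (ν * γ₁ + d * (1 + γ₁)) * (ν + 2 * d * (1 + γ₁)) < (ν + d) * γ₁ := by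
  -- At `d = 0` the inequalities read `ν < 1`, `ν < 1` and `ν² γ₁ < ν γ₁`.
  refine (ContinuousAt.eventually_lt (by fun_prop) (by fun_prop) ?_).and
    ((ContinuousAt.eventually_lt (by fun_prop) (by fun_prop) ?_).and
      (ContinuousAt.eventually_lt (by fun_prop) (by fun_prop) ?_))
  · simpa using hν1
  · simpa using hν1
  · simp only [mul_zero, zero_mul, add_zero]
    nlinarith [mul_pos hν hγ₁]

/-- Inclination lemma, one step, graph form: for the hyperbolic Poincaré map
`κ(u,s) = (Au + α(u,s), ᵀA⁻¹s + β(u,s))` with `‖A⁻¹‖, ‖ᵀA⁻¹‖ ≤ ν < 1` and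
`‖α‖_{C¹}, ‖β‖_{C¹} ≤ Cε^γ`, if `ε` is small then the image of the graph of any `f`
with slope `‖df‖ ≤ γ₁` is again a graph over the `ε`-ball, with slope `≤ ν₂γ₁`
(`ν₂ = ν + Cε^γ < 1`), and the induced horizontal map is invertible with inverse
differential bounded by `ν₁ = ν + C'ε^γ(1+γ₁) < 1`. -/
theorem stmt17 {m : ℕ} (ν C γ γ₁ : ℝ)
    (hν : 0 < ν) (hν1 : ν < 1) (hC : 0 < C) (hγ : 0 < γ) (hγ1 : 0 < γ₁) :
    ∃ ε₀ : ℝ, 0 < ε₀ ∧ ∃ C' : ℝ, 0 < C' ∧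
      ∀ ε : ℝ, 0 < ε → ε < ε₀ →
      ∀ (A B Ainv : EuclideanSpace ℝ (Fin m) →L[ℝ] EuclideanSpace ℝ (Fin m))
        (α β : EuclideanSpace ℝ (Fin m) × EuclideanSpace ℝ (Fin m) →
          EuclideanSpace ℝ (Fin m))
        (f : EuclideanSpace ℝ (Fin m) → EuclideanSpace ℝ (Fin m)),
        (∀ u, Ainv (A u) = u) → (∀ u, A (Ainv u) = u) →
        ‖Ainv‖ ≤ ν → ‖B‖ ≤ ν →
        ContDiff ℝ 1 α → ContDiff ℝ 1 β →
        α (0, 0) = 0 → β (0, 0) = 0 →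
        (∀ z, ‖α z‖ ≤ C * ε ^ γ ∧ ‖fderiv ℝ α z‖ ≤ C * ε ^ γ) →
        (∀ z, ‖β z‖ ≤ C * ε ^ γ ∧ ‖fderiv ℝ β z‖ ≤ C * ε ^ γ) →
        ContDiff ℝ 1 f → f 0 = 0 →
        (∀ u ∈ closedBall (0 : EuclideanSpace ℝ (Fin m)) ε, ‖fderiv ℝ f u‖ ≤ γ₁) →
        (∀ u ∈ ball (0 : EuclideanSpace ℝ (Fin m)) ε,
          f u ∈ ball (0 : EuclideanSpace ℝ (Fin m)) ε) →
        (ν + C * ε ^ γ < 1) ∧ (ν + C' * ε ^ γ * (1 + γ₁) < 1) ∧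
        Set.InjOn (fun u => A u + α (u, f u)) (ball (0 : EuclideanSpace ℝ (Fin m)) ε) ∧
        ∃ g f' : EuclideanSpace ℝ (Fin m) → EuclideanSpace ℝ (Fin m),
          ∀ u' ∈ ball (0 : EuclideanSpace ℝ (Fin m)) ε,
            g u' ∈ ball (0 : EuclideanSpace ℝ (Fin m)) ε ∧
            A (g u') + α (g u', f (g u')) = u' ∧
            DifferentiableAt ℝ g u' ∧
            ‖fderiv ℝ g u'‖ ≤ ν + C' * ε ^ γ * (1 + γ₁) ∧
            f' u' = B (f (g u')) + β (g u', f (g u')) ∧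
            DifferentiableAt ℝ f' u' ∧
            ‖fderiv ℝ f' u'‖ ≤ (ν + C * ε ^ γ) * γ₁ := by
  have hrpow : Tendsto (fun ε : ℝ => C * ε ^ γ) (𝓝 0) (𝓝 0) := by
    simpa [Real.zero_rpow hγ.ne'] using
      ((Real.continuousAt_rpow_const 0 γ (Or.inr hγ.le)).const_mul C).tendsto
  obtain ⟨ε₀, hε₀, hsmall⟩ := Metric.eventually_nhds_iff.1
    (hrpow.eventually (eventually_small_hyperbolicity_constants hν hν1 hγ1))
  refine ⟨ε₀, hε₀, 2 * C, by positivity, fun ε hε hεε₀ A B Ainv α β f hleft hright hAinv hB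
    hα hβ hα0 _ hαd hβd hf hf0 hfd _ => ?_⟩
  obtain ⟨hν₂, hν₁, hslope⟩ := hsmall (by rwa [Real.dist_0_eq_abs, abs_of_pos hε])
  rw [mul_assoc 2 C]
  set d := C * ε ^ γ
  have hd : 0 ≤ d := by positivity
  have hq : 0 ≤ d * (1 + γ₁) := by positivity
  refine ⟨hν₂, hν₁, graph_transform_of_hyperbolic hleft hright hAinv hB
    (hα.differentiable one_ne_zero) (hβ.differentiable one_ne_zero) hα0 (fun z => (hαd z).2)
    (fun z => (hβd z).2) (hf.differentiable one_ne_zero) hf0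
    (fun u hu => hfd u (ball_subset_closedBall hu)) hν hγ1.le
    (mul_le_mul_of_nonneg_left (max_le (by linarith) (by linarith)) hd) (by nlinarith)
    (by nlinarith [mul_nonneg hq (by nlinarith : 0 ≤ 2 - ν ^ 2 - 2 * ν * (d * (1 + γ₁)))])
    hslope.le⟩
end
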